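/- arXiv:2501.13404 — 11 statements merged into one kernel-verified Lean document; each statement's English description precedes it below -/
import Mathlib

section
/- Let n ≥ 3 and let b, c, x, y, z, t ∈ ℂ with b ≠ 0 and c ≠ 0. Put M = [[0, b],[c, 0]] and N = [[x,y],[z,t]], and for 1 ≤ i ≤ n−1 set σᵢ = Lᵢ(M) and τᵢ = Lᵢ(N) in Mₙ(ℂ). If the pair (M,N) satisfies the SMₙ mixed relations, then z = c·y/b and t = x. -/
open Matrix

def loc2 (n i : ℕ) (P : Matrix (Fin 2) (Fin 2) ℂ) : Matrix (Fin n) (Fin n) ℂ :=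
  Matrix.of fun r s =>
    if (r : ℕ) = i - 1 ∧ (s : ℕ) = i - 1 then P 0 0
    else if (r : ℕ) = i - 1 ∧ (s : ℕ) = i then P 0 1
    else if (r : ℕ) = i ∧ (s : ℕ) = i - 1 then P 1 0
    else if (r : ℕ) = i ∧ (s : ℕ) = i then P 1 1
    else if r = s then 1 else 0

/-- The pair `(M, N)` of 2×2 complex matrices satisfies the SMₙ mixed relations. -/
def SMRel2 (n : ℕ) (M N : Matrix (Fin 2) (Fin 2) ℂ) : Prop :=
  (∀ i j : ℕ, 1 ≤ i → i ≤ n - 1 → 1 ≤ j → j ≤ n - 1 → (i + 2 ≤ j ∨ j + 2 ≤ i) →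
      loc2 n i N * loc2 n j N = loc2 n j N * loc2 n i N) ∧
  (∀ i j : ℕ, 1 ≤ i → i ≤ n - 1 → 1 ≤ j → j ≤ n - 1 → (i + 2 ≤ j ∨ j + 2 ≤ i) →
      loc2 n i N * loc2 n j M = loc2 n j M * loc2 n i N) ∧
  (∀ i : ℕ, 1 ≤ i → i ≤ n - 1 →
      loc2 n i M * loc2 n i N = loc2 n i N * loc2 n i M) ∧
  (∀ i : ℕ, 1 ≤ i → i ≤ n - 2 →
      loc2 n i M * loc2 n (i + 1) M * loc2 n i N
        = loc2 n (i + 1) N * loc2 n i M * loc2 n (i + 1) M) ∧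
  (∀ i : ℕ, 1 ≤ i → i ≤ n - 2 →
      loc2 n (i + 1) M * loc2 n i M * loc2 n (i + 1) N
        = loc2 n i N * loc2 n (i + 1) M * loc2 n i M)

lemma sum_two {n : ℕ} (hn : 2 ≤ n) (g : Fin n → ℂ)
    (hg : ∀ k : Fin n, 2 ≤ (k : ℕ) → g k = 0) :
    ∑ k, g k = g ⟨0, by omega⟩ + g ⟨1, by omega⟩ := by
  rw [← Finset.sum_pair (a := (⟨0, by omega⟩ : Fin n)) (b := ⟨1, by omega⟩)
    (by simp [Fin.ext_iff])]
  refine (Finset.sum_subset (Finset.subset_univ _) ?_).symm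
  intro k _ hk
  apply hg
  simp only [Finset.mem_insert, Finset.mem_singleton] at hk
  push_neg at hk
  simp only [ne_eq, Fin.ext_iff] at hk
  omega

lemma loc2_one_zero {n : ℕ} (P : Matrix (Fin 2) (Fin 2) ℂ) (r k : Fin n)
    (hr : (r : ℕ) < 2) (hk : 2 ≤ (k : ℕ)) : loc2 n 1 P r k = 0 := by
  simp only [loc2, of_apply]
  rw [if_neg (by omega), if_neg (by omega), if_neg (by omega), if_neg (by omega),
    if_neg (by rw [Fin.ext_iff]; omega)]

theorem stmt3 (n : ℕ) (hn : 3 ≤ n) (b c x y z t : ℂ) (hb : b ≠ 0) (hc : c ≠ 0)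
    (h : SMRel2 n !![0, b; c, 0] !![x, y; z, t]) :
    z = c * y / b ∧ t = x := by
  have hcomm := h.2.2.1 1 le_rfl (by omega)
  set M := (!![0, b; c, 0] : Matrix (Fin 2) (Fin 2) ℂ)
  set N := (!![x, y; z, t] : Matrix (Fin 2) (Fin 2) ℂ)
  have i0 : Fin n := ⟨0, by omega⟩
  -- entrywise evaluation
  have key : ∀ s : Fin n, (s : ℕ) < 2 →
      loc2 n 1 M ⟨0, by omega⟩ ⟨0, by omega⟩ * loc2 n 1 N ⟨0, by omega⟩ s
        + loc2 n 1 M ⟨0, by omega⟩ ⟨1, by omega⟩ * loc2 n 1 N ⟨1, by omega⟩ s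
      = loc2 n 1 N ⟨0, by omega⟩ ⟨0, by omega⟩ * loc2 n 1 M ⟨0, by omega⟩ s
        + loc2 n 1 N ⟨0, by omega⟩ ⟨1, by omega⟩ * loc2 n 1 M ⟨1, by omega⟩ s := by
    intro s hs
    have e := congrFun (congrFun hcomm ⟨0, by omega⟩) s
    rw [Matrix.mul_apply, Matrix.mul_apply] at e
    rw [sum_two (by omega) _ (fun k hk => by
        rw [loc2_one_zero M _ _ (by simp) hk, zero_mul]),
      sum_two (by omega) _ (fun k hk => by
        rw [loc2_one_zero N _ _ (by simp) hk, zero_mul])] at e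
    exact e
  have e1 := key ⟨0, by omega⟩ (by simp)
  have e2 := key ⟨1, by omega⟩ (by simp)
  simp only [loc2, of_apply, M, N] at e1 e2
  norm_num at e1 e2
  refine ⟨?_, ?_⟩
  · field_simp
    linear_combination e1
  · exact mul_left_cancel₀ hb (by linear_combination e2)
end

section
/- Let n ≥ 3 and let a, c, u, v, w ∈ ℂ with c ≠ 0 and a ≠ 1, and put M = [[a, (1−a)/c],[c, 0]]. Then M is invertible, and for every 1 ≤ i ≤ n−1 the n×n matrix u·Lᵢ(M) + v·Lᵢ(M)⁻¹ + w·Iₙ equals the block-diagonal matrix diag((u+v+w)·I_{i−1}, B, (u+v+w)·I_{n−i−1}), where B = [[ua + w, (u(1−a) + v)/c],[uc + vc/(1−a), −va/(1−a) + w]]. In particular, every Φ-type extension Φ_{u,v,w} of the homogeneous 2-local representation σᵢ ↦ Lᵢ(M) of Bₙ to SMₙ sends τᵢ to this matrix. -/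
/-!
Write `Lᵢ(P) = 1 + E(P - 1)`, where `E` places a `2 × 2` matrix on the rows and columns
`i - 1, i` (0-based) and zeros elsewhere, i.e. `E(A) = Sᵀ A S` for the `2 × n` selection matrix
`S`. Since `S Sᵀ = 1`, `E` is multiplicative, hence so is `Lᵢ`, and `Lᵢ(M)⁻¹ = Lᵢ(M⁻¹)`.
The matrices `diag(c I, P, c I)` depend linearly on `(c, P)`, so `u Lᵢ(M) + v Lᵢ(M⁻¹) + w I` is
`diag((u + v + w) I, u M + v M⁻¹ + w I, (u + v + w) I)`, and the block is computed from the
explicit inverse `M⁻¹ = [[0, 1/c], [c/(1 - a), -a/(1 - a)]]`.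
-/

open Matrix

def locg2 (n i : ℕ) (e : ℂ) (P : Matrix (Fin 2) (Fin 2) ℂ) : Matrix (Fin n) (Fin n) ℂ :=
  Matrix.of fun r s =>
    if (r : ℕ) = i - 1 ∧ (s : ℕ) = i - 1 then P 0 0
    else if (r : ℕ) = i - 1 ∧ (s : ℕ) = i then P 0 1
    else if (r : ℕ) = i ∧ (s : ℕ) = i - 1 then P 1 0
    else if (r : ℕ) = i ∧ (s : ℕ) = i then P 1 1
    else if r = s then e else 0

namespace Matrix

variable {m n R : Type*} [Fintype m] [DecidableEq n] [CommRing R]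

def extendByZero (e : m → n) (A : Matrix m m R) : Matrix n n R :=
  (1 : Matrix n n R).submatrix id e * A * (1 : Matrix n n R).submatrix e id

theorem extendByZero_add (e : m → n) (A B : Matrix m m R) :
    extendByZero e (A + B) = extendByZero e A + extendByZero e B := by
  simp only [extendByZero, Matrix.mul_add, Matrix.add_mul]

theorem extendByZero_smul (e : m → n) (c : R) (A : Matrix m m R) :
    extendByZero e (c • A) = c • extendByZero e A := by
  simp only [extendByZero, Matrix.mul_smul, Matrix.smul_mul]

variable [DecidableEq m]

/-- `blockExtend e c P` is `P` on the rows and columns in the range of `e` and `c • 1` elsewhere. -/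
def blockExtend (e : m → n) (c : R) (P : Matrix m m R) : Matrix n n R :=
  c • 1 + extendByZero e (P - c • 1)

theorem blockExtend_one_one (e : m → n) : blockExtend e (1 : R) 1 = 1 := by
  simp [blockExtend, extendByZero]

theorem blockExtend_add (e : m → n) (c d : R) (P Q : Matrix m m R) :
    blockExtend e c P + blockExtend e d Q = blockExtend e (c + d) (P + Q) := by
  have h : P + Q - (c + d) • (1 : Matrix m m R) = (P - c • 1) + (Q - d • 1) := by module
  rw [blockExtend, blockExtend, blockExtend, h, extendByZero_add, add_smul]
  abel

theorem smul_blockExtend (e : m → n) (u c : R) (P : Matrix m m R) :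
    u • blockExtend e c P = blockExtend e (u * c) (u • P) := by
  rw [blockExtend, blockExtend, mul_smul, mul_smul, ← smul_sub, extendByZero_smul, smul_add]

variable [Fintype n]

theorem extendByZero_mul {e : m → n} (he : Function.Injective e) (A B : Matrix m m R) :
    extendByZero e (A * B) = extendByZero e A * extendByZero e B := by
  have h : (1 : Matrix n n R).submatrix e id * (1 : Matrix n n R).submatrix id e = 1 := by
    rw [← submatrix_mul _ _ _ _ _ Function.bijective_id, Matrix.one_mul, submatrix_one _ he]
  simp only [extendByZero, Matrix.mul_assoc, ← Matrix.mul_assoc _ (submatrix 1 id e), h,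
    Matrix.one_mul]

theorem blockExtend_one_mul {e : m → n} (he : Function.Injective e) (P Q : Matrix m m R) :
    blockExtend e 1 P * blockExtend e 1 Q = blockExtend e 1 (P * Q) := by
  have h : P * Q - 1 = (P - 1) + (Q - 1) + (P - 1) * (Q - 1) := by noncomm_ring
  simp only [blockExtend, one_smul]
  rw [h, extendByZero_add, extendByZero_add, extendByZero_mul he]
  noncomm_ring

theorem inv_blockExtend_one {e : m → n} (he : Function.Injective e) {P Q : Matrix m m R}
    (h : P * Q = 1) : (blockExtend e 1 P)⁻¹ = blockExtend e 1 Q :=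
  inv_eq_right_inv (by rw [blockExtend_one_mul he, h, blockExtend_one_one])

end Matrix

def adjacentPair (n i : ℕ) (hi1 : 1 ≤ i) (hi : i < n) : Fin 2 → Fin n :=
  ![⟨i - 1, by omega⟩, ⟨i, hi⟩]

theorem adjacentPair_injective (n i : ℕ) (hi1 : 1 ≤ i) (hi : i < n) :
    Function.Injective (adjacentPair n i hi1 hi) := by
  intro a b h
  fin_cases a <;> fin_cases b <;> simp_all [adjacentPair, Fin.ext_iff] <;> omega

theorem locg2_eq_blockExtend (n i : ℕ) (hi1 : 1 ≤ i) (hi : i < n) (c : ℂ)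
    (P : Matrix (Fin 2) (Fin 2) ℂ) :
    locg2 n i c P = blockExtend (adjacentPair n i hi1 hi) c P := by
  ext r s
  simp only [locg2, blockExtend, extendByZero, Matrix.add_apply, Matrix.mul_apply,
    Fin.sum_univ_two, Matrix.submatrix_apply, Matrix.smul_apply, Matrix.sub_apply,
    Matrix.one_apply, Matrix.of_apply, id]
  simp [adjacentPair, Fin.ext_iff]
  split_ifs <;> first | omega | ring

theorem loc2_eq_blockExtend (n i : ℕ) (hi1 : 1 ≤ i) (hi : i < n)
    (P : Matrix (Fin 2) (Fin 2) ℂ) :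
    loc2 n i P = blockExtend (adjacentPair n i hi1 hi) 1 P :=
  locg2_eq_blockExtend n i hi1 hi 1 P

theorem braidBlock_mul_inverse_eq_one (a c : ℂ) (hc : c ≠ 0) (ha : a ≠ 1) :
    !![a, (1 - a) / c; c, 0] * !![0, c⁻¹; c / (1 - a), -a / (1 - a)] = 1 := by
  have ha' : 1 - a ≠ 0 := sub_ne_zero.mpr ha.symm
  ext r s
  fin_cases r <;> fin_cases s <;> simp [Matrix.mul_apply, Fin.sum_univ_two]
  all_goals field_simp
  ring

theorem stmt4_general (n : ℕ) (a c u v w : ℂ) (hc : c ≠ 0) (ha : a ≠ 1) :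
    IsUnit !![a, (1 - a) / c; c, 0] ∧
    ∀ i : ℕ, 1 ≤ i → i ≤ n - 1 →
      u • loc2 n i !![a, (1 - a) / c; c, 0]
          + v • (loc2 n i !![a, (1 - a) / c; c, 0])⁻¹
          + w • (1 : Matrix (Fin n) (Fin n) ℂ)
        = locg2 n i (u + v + w)
            !![u * a + w, (u * (1 - a) + v) / c;
               u * c + v * c / (1 - a), -(v * a) / (1 - a) + w] := by
  have hMN := braidBlock_mul_inverse_eq_one a c hc ha
  refine ⟨IsUnit.of_mul_eq_one _ hMN, fun i hi1 hin => ?_⟩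
  have hi : i < n := by omega
  have he := adjacentPair_injective n i hi1 hi
  rw [loc2_eq_blockExtend n i hi1 hi, inv_blockExtend_one he hMN, locg2_eq_blockExtend n i hi1 hi,
    ← blockExtend_one_one (adjacentPair n i hi1 hi), smul_blockExtend, smul_blockExtend,
    smul_blockExtend, blockExtend_add, blockExtend_add]
  have ha' : 1 - a ≠ 0 := sub_ne_zero.mpr ha.symm
  congr 1
  · ring
  · ext r s
    fin_cases r <;> fin_cases s <;> simp <;> field_simp

theorem stmt4 (n : ℕ) (hn : 3 ≤ n) (a c u v w : ℂ) (hc : c ≠ 0) (ha : a ≠ 1) :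
    IsUnit !![a, (1 - a) / c; c, 0] ∧
    ∀ i : ℕ, 1 ≤ i → i ≤ n - 1 →
      u • loc2 n i !![a, (1 - a) / c; c, 0]
          + v • (loc2 n i !![a, (1 - a) / c; c, 0])⁻¹
          + w • (1 : Matrix (Fin n) (Fin n) ℂ)
        = locg2 n i (u + v + w)
            !![u * a + w, (u * (1 - a) + v) / c;
               u * c + v * c / (1 - a), -(v * a) / (1 - a) + w] :=
  stmt4_general n a c u v w hc ha
end

section
/- Let M = (m_{pq}) be a 3×3 complex matrix and consider the 5×5 matrices L₁(M) and L₃(M). If L₁(M)·L₃(M) = L₃(M)·L₁(M), then m₁₃ = 0, m₃₁ = 0, and moreover m₂₃(1 − m₁₁) = 0, m₁₂m₂₃ = 0, m₃₂(m₁₁ − 1) = 0, m₁₂(1 − m₃₃) = 0, m₂₁m₃₂ = 0, and m₂₁(m₃₃ − 1) = 0. -/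
open Matrix

def loc3 (m i : ℕ) (P : Matrix (Fin 3) (Fin 3) ℂ) : Matrix (Fin m) (Fin m) ℂ :=
  Matrix.of fun r s =>
    if (r : ℕ) = i - 1 ∧ (s : ℕ) = i - 1 then P 0 0
    else if (r : ℕ) = i - 1 ∧ (s : ℕ) = i then P 0 1
    else if (r : ℕ) = i - 1 ∧ (s : ℕ) = i + 1 then P 0 2
    else if (r : ℕ) = i ∧ (s : ℕ) = i - 1 then P 1 0
    else if (r : ℕ) = i ∧ (s : ℕ) = i then P 1 1
    else if (r : ℕ) = i ∧ (s : ℕ) = i + 1 then P 1 2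
    else if (r : ℕ) = i + 1 ∧ (s : ℕ) = i - 1 then P 2 0
    else if (r : ℕ) = i + 1 ∧ (s : ℕ) = i then P 2 1
    else if (r : ℕ) = i + 1 ∧ (s : ℕ) = i + 1 then P 2 2
    else if r = s then 1 else 0

theorem stmt8 (M : Matrix (Fin 3) (Fin 3) ℂ)
    (h : loc3 5 1 M * loc3 5 3 M = loc3 5 3 M * loc3 5 1 M) :
    M 0 2 = 0 ∧ M 2 0 = 0 ∧
    M 1 2 * (1 - M 0 0) = 0 ∧
    M 0 1 * M 1 2 = 0 ∧
    M 2 1 * (M 0 0 - 1) = 0 ∧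
    M 0 1 * (1 - M 2 2) = 0 ∧
    M 1 0 * M 2 1 = 0 ∧
    M 1 0 * (M 2 2 - 1) = 0 := by
  have e04 := congrFun (congrFun h 0) 4
  have e40 := congrFun (congrFun h 4) 0
  have e12 := congrFun (congrFun h 1) 2
  have e13 := congrFun (congrFun h 1) 3
  have e21 := congrFun (congrFun h 2) 1
  have e23 := congrFun (congrFun h 2) 3
  have e31 := congrFun (congrFun h 3) 1
  have e32 := congrFun (congrFun h 3) 2
  simp [loc3, Matrix.mul_apply, Fin.sum_univ_five,
    show ((0:Fin 5):ℕ)=0 from rfl, show ((1:Fin 5):ℕ)=1 from rfl,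
    show ((2:Fin 5):ℕ)=2 from rfl, show ((3:Fin 5):ℕ)=3 from rfl,
    show ((4:Fin 5):ℕ)=4 from rfl] at e04 e40 e12 e13 e21 e23 e31 e32
  refine ⟨e04, e40, by linear_combination -e12, ?_, by linear_combination -e21,
    by linear_combination -e23, ?_, by linear_combination -e32⟩
  · rcases e13 with h'|h' <;> simp [h']
  · rcases e31 with h'|h' <;> simp [h']
end

section
/- Let n ≥ 4 and let m₂₂, m₂₃ ∈ ℂ with m₂₂ ≠ 1 and m₂₃ ≠ 0. Put M = [[1,0,0],[0,m₂₂,m₂₃],[0,(1−m₂₂)/m₂₃,0]] and let N = (n_{pq}) be a 3×3 complex matrix. If the pair (M,N) satisfies the SMₙ mixed relations on M_{n+1}(ℂ), then n₁₁ = 1, n₁₂ = n₁₃ = n₂₁ = n₃₁ = 0, and: if m₂₂ = 0 then n₂₃ = m₂₃²·n₃₂ and n₃₃ = n₂₂; if m₂₂ ≠ 0 then n₂₂ = 1 − m₂₃n₃₂, n₂₃ = −m₂₃²n₃₂/(m₂₂ − 1), and n₃₃ = (m₂₂ + m₂₃n₃₂ − 1)/(m₂₂ − 1). -/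
/-
Consider σ₁τ₁ = τ₁σ₁ and σ₂σ₁τ₂ = τ₁σ₂σ₁. As L₁(P) and L₂(P) are block diagonal with an identity
block after the first four coordinates, these already hold in M₄(ℂ). There the (0-based) entries (0,0),
(0,2), (0,3), (1,0), (2,0), (1,1) of the second and (1,1), (1,2) of the first are linear equations
in the entries of N which, with m₂₃ · (1 − m₂₂)/m₂₃ = 1 − m₂₂, solve to the stated values.
-/

open Matrix

/-- The pair `(M, N)` of 3×3 complex matrices satisfies the SMₙ mixed relations
on `M_{n+1}(ℂ)`. -/
def SMRel3 (n : ℕ) (M N : Matrix (Fin 3) (Fin 3) ℂ) : Prop :=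
  (∀ i j : ℕ, 1 ≤ i → i ≤ n - 1 → 1 ≤ j → j ≤ n - 1 → (i + 2 ≤ j ∨ j + 2 ≤ i) →
      loc3 (n + 1) i N * loc3 (n + 1) j N = loc3 (n + 1) j N * loc3 (n + 1) i N) ∧
  (∀ i j : ℕ, 1 ≤ i → i ≤ n - 1 → 1 ≤ j → j ≤ n - 1 → (i + 2 ≤ j ∨ j + 2 ≤ i) →
      loc3 (n + 1) i N * loc3 (n + 1) j M = loc3 (n + 1) j M * loc3 (n + 1) i N) ∧
  (∀ i : ℕ, 1 ≤ i → i ≤ n - 1 →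
      loc3 (n + 1) i M * loc3 (n + 1) i N = loc3 (n + 1) i N * loc3 (n + 1) i M) ∧
  (∀ i : ℕ, 1 ≤ i → i ≤ n - 2 →
      loc3 (n + 1) i M * loc3 (n + 1) (i + 1) M * loc3 (n + 1) i N
        = loc3 (n + 1) (i + 1) N * loc3 (n + 1) i M * loc3 (n + 1) (i + 1) M) ∧
  (∀ i : ℕ, 1 ≤ i → i ≤ n - 2 →
      loc3 (n + 1) (i + 1) M * loc3 (n + 1) i M * loc3 (n + 1) (i + 1) N
        = loc3 (n + 1) i N * loc3 (n + 1) (i + 1) M * loc3 (n + 1) i M)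

section EmbedTopLeft

variable {R : Type*} [Semiring R] {m k N : ℕ}

def embedTopLeft (h : m + k = N) : Matrix (Fin m) (Fin m) R →* Matrix (Fin N) (Fin N) R where
  toFun A := reindex (finSumFinEquiv.trans (finCongr h)) (finSumFinEquiv.trans (finCongr h))
    (fromBlocks A 0 0 1)
  map_one' := by simp only [fromBlocks_one, reindex_apply, submatrix_one_equiv]
  map_mul' A B := by
    simp only [reindex_apply, submatrix_mul_equiv, fromBlocks_multiply]
    simp

theorem embedTopLeft_injective (h : m + k = N) :
    Function.Injective (embedTopLeft (R := R) h) := by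
  intro A B hAB
  simpa [embedTopLeft] using (reindex _ _).injective hAB

end EmbedTopLeft

theorem loc3_apply_of_le {N i : ℕ} (P : Matrix (Fin 3) (Fin 3) ℂ) {r s : Fin N}
    (h : i + 2 ≤ r ∨ i + 2 ≤ s) : loc3 N i P r s = if r = s then 1 else 0 := by
  simp only [loc3, of_apply]
  repeat rw [if_neg (by omega)]

theorem loc3_eq_embedTopLeft {m k N i : ℕ} (h : m + k = N) (hi : i + 2 ≤ m)
    (P : Matrix (Fin 3) (Fin 3) ℂ) : loc3 N i P = embedTopLeft h (loc3 m i P) := by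
  ext r s
  obtain ⟨x, rfl⟩ := (finSumFinEquiv.trans (finCongr h)).surjective r
  obtain ⟨y, rfl⟩ := (finSumFinEquiv.trans (finCongr h)).surjective s
  rcases x with x | x <;> rcases y with y | y
  · simp [embedTopLeft, loc3]
  all_goals
    rw [loc3_apply_of_le _ (by simp; omega)]
    simp [embedTopLeft, one_apply, Fin.ext_iff] <;> omega

theorem loc3_four_one (P : Matrix (Fin 3) (Fin 3) ℂ) :
    loc3 4 1 P = !![P 0 0, P 0 1, P 0 2, 0; P 1 0, P 1 1, P 1 2, 0; P 2 0, P 2 1, P 2 2, 0;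
      0, 0, 0, 1] := by
  ext r s; fin_cases r <;> fin_cases s <;> rfl

theorem loc3_four_two (P : Matrix (Fin 3) (Fin 3) ℂ) :
    loc3 4 2 P = !![1, 0, 0, 0; 0, P 0 0, P 0 1, P 0 2; 0, P 1 0, P 1 1, P 1 2;
      0, P 2 0, P 2 1, P 2 2] := by
  ext r s; fin_cases r <;> fin_cases s <;> rfl

theorem SMRel3.commute_braid_loc3_four {n : ℕ} (hn : 3 ≤ n) {M N : Matrix (Fin 3) (Fin 3) ℂ}
    (h : SMRel3 n M N) :
    loc3 4 1 M * loc3 4 1 N = loc3 4 1 N * loc3 4 1 M ∧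
      loc3 4 2 M * loc3 4 1 M * loc3 4 2 N = loc3 4 1 N * loc3 4 2 M * loc3 4 1 M := by
  have e : 4 + (n - 3) = n + 1 := by omega
  have hcomm := h.2.2.1 1 le_rfl (by omega)
  have hbraid := h.2.2.2.2 1 le_rfl (by omega)
  simp only [loc3_eq_embedTopLeft e (i := 1) (by norm_num),
    loc3_eq_embedTopLeft e (i := 1 + 1) (by norm_num), ← map_mul] at hcomm hbraid
  exact ⟨embedTopLeft_injective e hcomm, embedTopLeft_injective e hbraid⟩

section Entries

variable {a b c : ℂ} {N : Matrix (Fin 3) (Fin 3) ℂ}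

theorem entries_of_loc3_braid_four (hb : b ≠ 0)
    (h : loc3 4 2 !![1, 0, 0; 0, a, b; 0, c, 0] * loc3 4 1 !![1, 0, 0; 0, a, b; 0, c, 0] *
        loc3 4 2 N =
      loc3 4 1 N * loc3 4 2 !![1, 0, 0; 0, a, b; 0, c, 0] *
        loc3 4 1 !![1, 0, 0; 0, a, b; 0, c, 0]) :
    N 0 0 = 1 ∧ N 0 1 = 0 ∧ N 0 2 = 0 ∧ N 1 0 = 0 ∧ N 2 0 = 0 ∧ a * (N 1 1 + c * N 1 2) = a := by
  simp only [loc3_four_one, loc3_four_two] at h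
  have e00 : 1 = N 0 0 := by simpa [mul_apply, Fin.sum_univ_four] using congrFun₂ h 0 0
  have e02 : 0 = N 0 1 * b := by simpa [mul_apply, Fin.sum_univ_four] using congrFun₂ h 0 2
  have e03 : 0 = N 0 2 * b := by simpa [mul_apply, Fin.sum_univ_four] using congrFun₂ h 0 3
  have e10 : 0 = N 1 0 := by simpa [mul_apply, Fin.sum_univ_four] using congrFun₂ h 1 0
  have e20 : 0 = N 2 0 := by simpa [mul_apply, Fin.sum_univ_four] using congrFun₂ h 2 0
  have e11 : a * N 0 0 + b * N 1 0 = N 1 1 * a + N 1 2 * a * c := by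
    simpa [mul_apply, Fin.sum_univ_four] using congrFun₂ h 1 1
  refine ⟨e00.symm, ?_, ?_, e10.symm, e20.symm, ?_⟩
  · simpa [hb] using e02
  · simpa [hb] using e03
  · rw [← e00, ← e10] at e11
    linear_combination -e11

theorem entries_of_loc3_commute_four
    (h : loc3 4 1 !![1, 0, 0; 0, a, b; 0, c, 0] * loc3 4 1 N =
      loc3 4 1 N * loc3 4 1 !![1, 0, 0; 0, a, b; 0, c, 0]) :
    b * N 2 1 = c * N 1 2 ∧ a * N 1 2 + b * N 2 2 = b * N 1 1 := by
  simp only [loc3_four_one] at h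
  have e11 : a * N 1 1 + b * N 2 1 = N 1 1 * a + N 1 2 * c := by
    simpa [mul_apply, Fin.sum_univ_four] using congrFun₂ h 1 1
  have e12 : a * N 1 2 + b * N 2 2 = N 1 1 * b := by
    simpa [mul_apply, Fin.sum_univ_four] using congrFun₂ h 1 2
  exact ⟨by linear_combination e11, by linear_combination e12⟩

end Entries

theorem stmt9 (n : ℕ) (hn : 4 ≤ n) (m22 m23 : ℂ) (h22 : m22 ≠ 1) (h23 : m23 ≠ 0)
    (N : Matrix (Fin 3) (Fin 3) ℂ)
    (h : SMRel3 n !![1, 0, 0; 0, m22, m23; 0, (1 - m22) / m23, 0] N) :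
    N 0 0 = 1 ∧ N 0 1 = 0 ∧ N 0 2 = 0 ∧ N 1 0 = 0 ∧ N 2 0 = 0 ∧
    (m22 = 0 → N 1 2 = m23 ^ 2 * N 2 1 ∧ N 2 2 = N 1 1) ∧
    (m22 ≠ 0 → N 1 1 = 1 - m23 * N 2 1 ∧
      N 1 2 = -(m23 ^ 2 * N 2 1) / (m22 - 1) ∧
      N 2 2 = (m22 + m23 * N 2 1 - 1) / (m22 - 1)) := by
  obtain ⟨hcomm, hbraid⟩ := h.commute_braid_loc3_four (by omega)
  obtain ⟨h00, h01, h02, h10, h20, hdiag⟩ := entries_of_loc3_braid_four h23 hbraid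
  obtain ⟨hc11, hc12⟩ := entries_of_loc3_commute_four hcomm
  set c := (1 - m22) / m23
  have hc : m23 * c = 1 - m22 := mul_div_cancel₀ _ h23
  have hN12 : N 1 2 * (m22 - 1) = -(m23 ^ 2 * N 2 1) := by
    linear_combination N 1 2 * hc + m23 * hc11
  refine ⟨h00, h01, h02, h10, h20, fun ha => ⟨?_, ?_⟩, fun ha => ?_⟩
  · linear_combination -hN12 + N 1 2 * ha
  · exact mul_left_cancel₀ h23 (by linear_combination hc12 - N 1 2 * ha)
  · have hsum : N 1 1 + c * N 1 2 = 1 := mul_left_cancel₀ ha (by linear_combination hdiag)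
    have hN11 : N 1 1 = 1 - m23 * N 2 1 := by linear_combination hsum + hc11
    have hN22 : N 2 2 * (m22 - 1) = m22 + m23 * N 2 1 - 1 := mul_left_cancel₀ h23
      (by linear_combination (m22 - 1) * hc12 - m22 * hN12 + (m22 - 1) * m23 * hN11)
    have hw : m22 - 1 ≠ 0 := sub_ne_zero.mpr h22
    exact ⟨hN11, (eq_div_iff hw).2 hN12, (eq_div_iff hw).2 hN22⟩
end

section
/- Let n ≥ 4 and let m₁₂, m₂₂ ∈ ℂ with m₂₂ ≠ 1 and m₁₂ ≠ 0. Put M = [[0,m₁₂,0],[(1−m₂₂)/m₁₂,m₂₂,0],[0,0,1]] and let N = (n_{pq}) be a 3×3 complex matrix. If the pair (M,N) satisfies the SMₙ mixed relations on M_{n+1}(ℂ), then n₁₃ = n₂₃ = n₃₁ = n₃₂ = 0, n₃₃ = 1, and: if m₂₂ = 0 then n₁₂ = m₁₂²·n₂₁ and n₂₂ = n₁₁; if m₂₂ ≠ 0 then n₁₁ = (m₁₂n₂₁ + m₂₂ − 1)/(m₂₂ − 1), n₁₂ = −m₁₂²n₂₁/(m₂₂ − 1), and n₂₂ = 1 −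 m₁₂n₂₁. -/
open Matrix

/-!
Since `n ≥ 4`, the matrices `σ₁, σ₂, σ₃, τ₁, τ₂` are block upper triangular with respect to the
first five coordinates, so the relations among them can be read off in the top-left 5×5 corner.
There (indices 1-based), `τ₁σ₃ = σ₃τ₁` together with `m₁₁ = 0` kills the entries of `N` outside
its upper-left 2×2 block, the (4,4) entry of `σ₂σ₁τ₂ = τ₁σ₂σ₁` gives `n₃₃ = 1`, and the 2×2 block
is then pinned down by the commutation `σ₁τ₁ = τ₁σ₁` and two entries of `σ₁σ₂τ₁ = τ₂σ₁σ₂`; the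
latter carry a factor `m₂₂`, which is why the case `m₂₂ = 0` leaves one more degree of freedom.
-/

theorem submatrix_castLE_mul {R : Type*} [Semiring R] {k m : ℕ} (h : k ≤ m)
    (A B : Matrix (Fin m) (Fin m) R)
    (hA : ∀ r s : Fin m, (r : ℕ) < k → k ≤ (s : ℕ) → A r s = 0) :
    (A * B).submatrix (Fin.castLE h) (Fin.castLE h) =
      A.submatrix (Fin.castLE h) (Fin.castLE h) * B.submatrix (Fin.castLE h) (Fin.castLE h) := by
  ext r s
  simp only [submatrix_apply, mul_apply]
  rw [← Finset.sum_subset (Finset.subset_univ (Finset.univ.map (Fin.castLEEmb h))), Finset.sum_map]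
  · rfl
  · intro t _ ht
    have hkt : k ≤ (t : ℕ) := by
      by_contra! htk
      exact ht (Finset.mem_map.mpr ⟨⟨t, htk⟩, Finset.mem_univ _, rfl⟩)
    rw [hA _ _ (by simp) hkt, zero_mul]

theorem loc3_apply_eq_zero {m i k : ℕ} (hi : i + 2 ≤ k) (P : Matrix (Fin 3) (Fin 3) ℂ)
    (r s : Fin m) (hr : (r : ℕ) < k) (hs : k ≤ (s : ℕ)) : loc3 m i P r s = 0 := by
  have h1 : (s : ℕ) ≠ i - 1 := by omega
  have h2 : (s : ℕ) ≠ i := by omega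
  have h3 : (s : ℕ) ≠ i + 1 := by omega
  have hrs : r ≠ s := fun e => by subst e; omega
  simp only [loc3, of_apply, h1, h2, h3, hrs, and_false, if_false]

theorem submatrix_loc3 {k m : ℕ} (h : k ≤ m) (i : ℕ) (P : Matrix (Fin 3) (Fin 3) ℂ) :
    (loc3 m i P).submatrix (Fin.castLE h) (Fin.castLE h) = loc3 k i P := by
  ext r s
  simp only [loc3, submatrix_apply, of_apply, Fin.val_castLE, Fin.castLE_inj]

theorem submatrix_loc3_mul {k m i : ℕ} (h : k ≤ m) (hi : i + 2 ≤ k)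
    (P : Matrix (Fin 3) (Fin 3) ℂ) (B : Matrix (Fin m) (Fin m) ℂ) :
    (loc3 m i P * B).submatrix (Fin.castLE h) (Fin.castLE h) =
      loc3 k i P * B.submatrix (Fin.castLE h) (Fin.castLE h) := by
  rw [submatrix_castLE_mul h _ _ (loc3_apply_eq_zero hi P), submatrix_loc3]

theorem SMRel3.loc3_five_relations {n : ℕ} (hn : 4 ≤ n) {M N : Matrix (Fin 3) (Fin 3) ℂ}
    (h : SMRel3 n M N) :
    loc3 5 1 N * loc3 5 3 M = loc3 5 3 M * loc3 5 1 N ∧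
    loc3 5 1 M * loc3 5 1 N = loc3 5 1 N * loc3 5 1 M ∧
    loc3 5 1 M * (loc3 5 2 M * loc3 5 1 N) = loc3 5 2 N * (loc3 5 1 M * loc3 5 2 M) ∧
    loc3 5 2 M * (loc3 5 1 M * loc3 5 2 N) = loc3 5 1 N * (loc3 5 2 M * loc3 5 1 M) := by
  obtain ⟨-, hNM, hcomm, hbraid, hbraid'⟩ := h
  have h5 : 5 ≤ n + 1 := by omega
  have restrict {X Y : Matrix (Fin (n + 1)) (Fin (n + 1)) ℂ} (e : X = Y) :=
    congrArg (fun A => A.submatrix (Fin.castLE h5) (Fin.castLE h5)) e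
  refine ⟨?_, ?_, ?_, ?_⟩
  · simpa (disch := omega) only [submatrix_loc3_mul h5, submatrix_loc3] using
      restrict (hNM 1 3 le_rfl (by omega) (by omega) (by omega) (by omega))
  · simpa (disch := omega) only [submatrix_loc3_mul h5, submatrix_loc3] using
      restrict (hcomm 1 le_rfl (by omega))
  · simpa (disch := omega) only [Nat.reduceAdd, mul_assoc, submatrix_loc3_mul h5,
      submatrix_loc3] using restrict (hbraid 1 le_rfl (by omega))
  · simpa (disch := omega) only [Nat.reduceAdd, mul_assoc, submatrix_loc3_mul h5,
      submatrix_loc3] using restrict (hbraid' 1 le_rfl (by omega))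

theorem offBlock_eq_zero_of_commute_loc3 {M N : Matrix (Fin 3) (Fin 3) ℂ} (hM : M 0 0 = 0)
    (h : loc3 5 1 N * loc3 5 3 M = loc3 5 3 M * loc3 5 1 N) :
    N 0 2 = 0 ∧ N 1 2 = 0 ∧ N 2 0 = 0 ∧ N 2 1 = 0 := by
  have entry (r s : Fin 5) := congrFun (congrFun h r) s
  refine ⟨?_, ?_, ?_, ?_⟩
  · simpa [mul_apply, Fin.sum_univ_five, loc3, hM] using (entry 0 2).symm
  · simpa [mul_apply, Fin.sum_univ_five, loc3, hM] using (entry 1 2).symm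
  · simpa [mul_apply, Fin.sum_univ_five, loc3, hM] using entry 2 0
  · simpa [mul_apply, Fin.sum_univ_five, loc3, hM] using entry 2 1

theorem apply_two_two_eq_one_of_braid {M N : Matrix (Fin 3) (Fin 3) ℂ}
    (h20 : M 2 0 = 0) (h21 : M 2 1 = 0) (h22 : M 2 2 = 1)
    (h : loc3 5 2 M * (loc3 5 1 M * loc3 5 2 N) = loc3 5 1 N * (loc3 5 2 M * loc3 5 1 M)) :
    N 2 2 = 1 := by
  simpa [mul_apply, Fin.sum_univ_five, loc3, h20, h21, h22] using congrFun (congrFun h 3) 3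

def twoBlock (a c d : ℂ) : Matrix (Fin 3) (Fin 3) ℂ :=
  !![0, a, 0; c, d, 0; 0, 0, 1]

theorem entries_of_commute_loc3_twoBlock {a c d : ℂ} {N : Matrix (Fin 3) (Fin 3) ℂ}
    (h : loc3 5 1 (twoBlock a c d) * loc3 5 1 N = loc3 5 1 N * loc3 5 1 (twoBlock a c d)) :
    a * N 1 0 = c * N 0 1 ∧ a * N 1 1 = a * N 0 0 + d * N 0 1 := by
  have entry (r s : Fin 5) := congrFun (congrFun h r) s
  constructor
  · simpa [mul_apply, Fin.sum_univ_five, loc3, twoBlock, mul_comm] using entry 0 0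
  · simpa [mul_apply, Fin.sum_univ_five, loc3, twoBlock, mul_comm] using entry 0 1

theorem entries_of_braid_loc3_twoBlock {a c d : ℂ} {N : Matrix (Fin 3) (Fin 3) ℂ}
    (h : loc3 5 1 (twoBlock a c d) * (loc3 5 2 (twoBlock a c d) * loc3 5 1 N) =
      loc3 5 2 N * (loc3 5 1 (twoBlock a c d) * loc3 5 2 (twoBlock a c d))) :
    c * N 0 2 + a * d * N 2 2 = a * d * N 0 0 + d * N 0 1 ∧
      c * N 1 2 + d * N 2 2 = a * d * N 1 0 + d * N 1 1 := by
  have entry (r s : Fin 5) := congrFun (congrFun h r) s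
  constructor
  · convert entry 1 2 using 1 <;> simp [mul_apply, Fin.sum_univ_five, loc3, twoBlock] <;> ring
  · convert entry 2 2 using 1 <;> simp [mul_apply, Fin.sum_univ_five, loc3, twoBlock]
    ring

section TwoBlockAlgebra

variable {K : Type*} [Field K] {a d x y z w : K}

theorem twoBlock_entries_of_eq_zero (ha : a ≠ 0) (hd : d = 0)
    (hzy : a * z = (1 - d) / a * y) (hwx : a * w = a * x + d * y) :
    y = a ^ 2 * z ∧ w = x := by
  subst hd
  field_simp at hzy
  exact ⟨by linear_combination -hzy, mul_left_cancel₀ ha (by linear_combination hwx)⟩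

theorem twoBlock_entries_of_ne_zero (ha : a ≠ 0) (hd1 : d ≠ 1) (hd : d ≠ 0)
    (hzy : a * z = (1 - d) / a * y) (hxy : a * d = a * d * x + d * y)
    (hzw : d = a * d * z + d * w) :
    x = (a * z + d - 1) / (d - 1) ∧ y = -(a ^ 2 * z) / (d - 1) ∧ w = 1 - a * z := by
  have hy : y = a * (1 - x) := mul_left_cancel₀ hd (by linear_combination -hxy)
  have hw : w = 1 - a * z := mul_left_cancel₀ hd (by linear_combination -hzw)
  have hz : a * z = (1 - d) * (1 - x) := by
    rw [hzy, hy]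
    field_simp
  have hd1' : d - 1 ≠ 0 := sub_ne_zero.mpr hd1
  refine ⟨?_, ?_, hw⟩
  · rw [eq_div_iff hd1']
    linear_combination -hz
  · rw [eq_div_iff hd1', hy]
    linear_combination a * hz

end TwoBlockAlgebra

theorem stmt10 (n : ℕ) (hn : 4 ≤ n) (m12 m22 : ℂ) (h22 : m22 ≠ 1) (h12 : m12 ≠ 0)
    (N : Matrix (Fin 3) (Fin 3) ℂ)
    (h : SMRel3 n !![0, m12, 0; (1 - m22) / m12, m22, 0; 0, 0, 1] N) :
    N 0 2 = 0 ∧ N 1 2 = 0 ∧ N 2 0 = 0 ∧ N 2 1 = 0 ∧ N 2 2 = 1 ∧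
    (m22 = 0 → N 0 1 = m12 ^ 2 * N 1 0 ∧ N 1 1 = N 0 0) ∧
    (m22 ≠ 0 → N 0 0 = (m12 * N 1 0 + m22 - 1) / (m22 - 1) ∧
      N 0 1 = -(m12 ^ 2 * N 1 0) / (m22 - 1) ∧
      N 1 1 = 1 - m12 * N 1 0) := by
  obtain ⟨hσ₃τ₁, hσ₁τ₁, hbraid, hbraid'⟩ := h.loc3_five_relations hn
  obtain ⟨hN02, hN12, hN20, hN21⟩ := offBlock_eq_zero_of_commute_loc3 (by simp) hσ₃τ₁
  have hN22 : N 2 2 = 1 := apply_two_two_eq_one_of_braid (by simp) (by simp) (by simp) hbraid'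
  obtain ⟨hzy, hwx⟩ := entries_of_commute_loc3_twoBlock hσ₁τ₁
  obtain ⟨hxy, hzw⟩ := entries_of_braid_loc3_twoBlock hbraid
  rw [hN02, hN22, mul_zero, zero_add, mul_one] at hxy
  rw [hN12, hN22, mul_zero, zero_add, mul_one] at hzw
  refine ⟨hN02, hN12, hN20, hN21, hN22, fun hd => ?_, fun hd => ?_⟩
  · exact twoBlock_entries_of_eq_zero h12 hd hzy hwx
  · exact twoBlock_entries_of_ne_zero h12 h22 hd hzy hxy hzw
end

section
/- Let n ≥ 4 and let m₂₂, m₂₃ ∈ ℂ with m₂₂·m₂₃ ≠ 0. Put M = [[1,0,0],[−m₂₂/m₂₃,m₂₂,m₂₃],[0,0,1]] and let N = (n_{pq}) be a 3×3 complex matrix. If the pair (M,N) satisfies the SMₙ mixed relations on M_{n+1}(ℂ), then n₁₁ = 1, n₁₂ = n₁₃ = n₃₁ = n₃₂ = 0, n₃₃ = 1, n₂₂ = 1 − m₂₃n₂₁ + m₂₃n₂₁/m₂₂, and n₂₃ = −m₂₃²n₂₁/m₂₂. -/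
/-!
Every `loc3 m i P` with `i ≤ 3` is the identity outside the leading `5 × 5` block, and such
matrices never mix that block with its complement under multiplication. So each relation used
restricts to `Fin 5` (or `Fin 4`, `Fin 3`), where it becomes a few explicit scalar equations.
Commuting τ₃ with σ₁ forces the first row of `N` to be `(1, 0, 0)` since `m₂₃ ≠ 0`; commuting
τ₁ with σ₃ forces the last row to be `(0, 0, 1)` since `-m₂₂/m₂₃ ≠ 0`. Then `σ₁τ₁ = τ₁σ₁`
determines `n₂₂`, and the braid relation `σ₁σ₂τ₁ = τ₂σ₁σ₂` determines `n₂₃`.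
-/

open Matrix

namespace Matrix

variable {ι ι' κ κ' R : Type*} [Fintype κ] [NonUnitalNonAssocSemiring R]

def RowsSupportedOnRange (e : ι → κ) (A : Matrix κ κ R) : Prop :=
  ∀ i x, x ∉ Set.range e → A (e i) x = 0

theorem RowsSupportedOnRange.mul {e : ι → κ} {A B : Matrix κ κ R}
    (hA : RowsSupportedOnRange e A) (hB : RowsSupportedOnRange e B) :
    RowsSupportedOnRange e (A * B) := by
  intro i x hx
  rw [mul_apply]
  refine Finset.sum_eq_zero fun y _ => ?_
  by_cases hy : y ∈ Set.range e
  · obtain ⟨j, rfl⟩ := hy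
    rw [hB j x hx, mul_zero]
  · rw [hA i y hy, zero_mul]

theorem submatrix_mul_of_rowsSupportedOnRange [Fintype ι] {e : ι → κ} (he : e.Injective)
    (f : ι' → κ') {A : Matrix κ κ R} {B : Matrix κ κ' R} (hA : RowsSupportedOnRange e A) :
    (A * B).submatrix e f = A.submatrix e e * B.submatrix e f := by
  ext i j
  simp only [submatrix_apply, mul_apply]
  exact (Fintype.sum_of_injective e he _ _ (fun x hx => by rw [hA i x hx, zero_mul])
    fun _ => rfl).symm

end Matrix

theorem loc3_apply_of_add_two_le {m i : ℕ} (P : Matrix (Fin 3) (Fin 3) ℂ) {r s : Fin m}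
    (hs : i + 2 ≤ s) : loc3 m i P r s = if r = s then 1 else 0 := by
  simp [loc3, show (s : ℕ) ≠ i - 1 by omega, show (s : ℕ) ≠ i by omega,
    show (s : ℕ) ≠ i + 1 by omega]

section Restriction

variable {k m : ℕ} (hk : k ≤ m)
include hk

theorem loc3_submatrix_castLE (i : ℕ) (P : Matrix (Fin 3) (Fin 3) ℂ) :
    (loc3 m i P).submatrix (Fin.castLE hk) (Fin.castLE hk) = loc3 k i P := by
  ext r s
  simp [loc3, Fin.ext_iff]

theorem rowsSupportedOnRange_loc3 {i : ℕ} (hi : i + 2 ≤ k) (P : Matrix (Fin 3) (Fin 3) ℂ) :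
    RowsSupportedOnRange (Fin.castLE hk) (loc3 m i P) := by
  intro r x hx
  have hkx : k ≤ (x : ℕ) := by
    by_contra! hxk
    exact hx ⟨⟨x, hxk⟩, rfl⟩
  rw [loc3_apply_of_add_two_le P (hi.trans hkx), if_neg fun hrx => hx ⟨r, hrx⟩]

theorem loc3_mul_loc3_eq_of_castLE {i j i' j' : ℕ} (hi : i + 2 ≤ k) (hi' : i' + 2 ≤ k)
    {P Q P' Q' : Matrix (Fin 3) (Fin 3) ℂ}
    (h : loc3 m i P * loc3 m j Q = loc3 m i' P' * loc3 m j' Q') :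
    loc3 k i P * loc3 k j Q = loc3 k i' P' * loc3 k j' Q' := by
  have := congrArg (submatrix · (Fin.castLE hk) (Fin.castLE hk)) h
  simpa only [submatrix_mul_of_rowsSupportedOnRange (Fin.castLE_injective hk) _
    (rowsSupportedOnRange_loc3 hk hi _), submatrix_mul_of_rowsSupportedOnRange
    (Fin.castLE_injective hk) _ (rowsSupportedOnRange_loc3 hk hi' _),
    loc3_submatrix_castLE] using this

theorem loc3_mul_loc3_mul_loc3_eq_of_castLE {i j l i' j' l' : ℕ} (hi : i + 2 ≤ k)
    (hj : j + 2 ≤ k) (hi' : i' + 2 ≤ k) (hj' : j' + 2 ≤ k)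
    {P Q R P' Q' R' : Matrix (Fin 3) (Fin 3) ℂ}
    (h : loc3 m i P * loc3 m j Q * loc3 m l R = loc3 m i' P' * loc3 m j' Q' * loc3 m l' R') :
    loc3 k i P * loc3 k j Q * loc3 k l R = loc3 k i' P' * loc3 k j' Q' * loc3 k l' R' := by
  have := congrArg (submatrix · (Fin.castLE hk) (Fin.castLE hk)) h
  have he := Fin.castLE_injective hk
  simpa only [submatrix_mul_of_rowsSupportedOnRange he _
      ((rowsSupportedOnRange_loc3 hk hi _).mul (rowsSupportedOnRange_loc3 hk hj _)),
    submatrix_mul_of_rowsSupportedOnRange he _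
      ((rowsSupportedOnRange_loc3 hk hi' _).mul (rowsSupportedOnRange_loc3 hk hj' _)),
    submatrix_mul_of_rowsSupportedOnRange he _ (rowsSupportedOnRange_loc3 hk hi _),
    submatrix_mul_of_rowsSupportedOnRange he _ (rowsSupportedOnRange_loc3 hk hi' _),
    loc3_submatrix_castLE] using this

end Restriction

theorem loc3_three_one (P : Matrix (Fin 3) (Fin 3) ℂ) : loc3 3 1 P = P := by
  ext r s
  fin_cases r <;> fin_cases s <;> rfl

section Entries

variable {M N : Matrix (Fin 3) (Fin 3) ℂ}

theorem row_zero_eq_of_commute_loc3 (hM : M 1 2 ≠ 0)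
    (h : loc3 5 3 N * loc3 5 1 M = loc3 5 1 M * loc3 5 3 N) :
    N 0 0 = 1 ∧ N 0 1 = 0 ∧ N 0 2 = 0 := by
  have e0 := congrFun₂ h 1 2
  have e1 := congrFun₂ h 1 3
  have e2 := congrFun₂ h 1 4
  simp [loc3, mul_apply, Fin.sum_univ_five, hM] at e0 e1 e2
  exact ⟨e0, e1, e2⟩

theorem row_two_eq_of_commute_loc3 (hM : M 1 0 ≠ 0)
    (h : loc3 5 1 N * loc3 5 3 M = loc3 5 3 M * loc3 5 1 N) :
    N 2 0 = 0 ∧ N 2 1 = 0 ∧ N 2 2 = 1 := by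
  have e0 := congrFun₂ h 3 0
  have e1 := congrFun₂ h 3 1
  have e2 := congrFun₂ h 3 2
  simp [loc3, mul_apply, Fin.sum_univ_five, hM] at e0 e1 e2
  exact ⟨e0, e1, e2⟩

variable {b c : ℂ} (hM : M = !![1, 0, 0; -b / c, b, c; 0, 0, 1])
include hM

theorem apply_one_one_eq_of_commute (hb : b ≠ 0) (hc : c ≠ 0) (hN00 : N 0 0 = 1)
    (hN20 : N 2 0 = 0) (h : Commute M N) : N 1 1 = 1 - c * N 1 0 + c * N 1 0 / b := by
  have e := congrFun₂ h.eq 1 0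
  simp [mul_apply, Fin.sum_univ_three, hM, hN00, hN20] at e
  field_simp at e ⊢
  linear_combination e

theorem apply_one_two_eq_of_braid (hb : b ≠ 0) (hN11 : N 1 1 = 1 - c * N 1 0 + c * N 1 0 / b)
    (h : loc3 4 1 M * loc3 4 2 M * loc3 4 1 N = loc3 4 2 N * loc3 4 1 M * loc3 4 2 M) :
    N 1 2 = -(c ^ 2 * N 1 0) / b := by
  have e := congrFun₂ h 2 3
  simp [loc3, mul_apply, Fin.sum_univ_four, hM] at e
  rw [hN11] at e
  field_simp at e ⊢
  linear_combination -e

end Entries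

theorem stmt12 (n : ℕ) (hn : 4 ≤ n) (m22 m23 : ℂ) (hm : m22 * m23 ≠ 0)
    (N : Matrix (Fin 3) (Fin 3) ℂ)
    (h : SMRel3 n !![1, 0, 0; -m22 / m23, m22, m23; 0, 0, 1] N) :
    N 0 0 = 1 ∧ N 0 1 = 0 ∧ N 0 2 = 0 ∧ N 2 0 = 0 ∧ N 2 1 = 0 ∧ N 2 2 = 1 ∧
    N 1 1 = 1 - m23 * N 1 0 + m23 * N 1 0 / m22 ∧
    N 1 2 = -(m23 ^ 2 * N 1 0) / m22 := by
  obtain ⟨-, hfar, hcomm, hbraid, -⟩ := h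
  have hb : m22 ≠ 0 := left_ne_zero_of_mul hm
  have hc : m23 ≠ 0 := right_ne_zero_of_mul hm
  have h5 : 5 ≤ n + 1 := by omega
  obtain ⟨h00, h01, h02⟩ := row_zero_eq_of_commute_loc3 (by simpa using hc)
    (loc3_mul_loc3_eq_of_castLE h5 (by norm_num) (by norm_num)
      (hfar 3 1 (by norm_num) (by omega) le_rfl (by omega) (by omega)))
  obtain ⟨h20, h21, h22⟩ := row_two_eq_of_commute_loc3 (by simp [hb, hc])
    (loc3_mul_loc3_eq_of_castLE h5 (by norm_num) (by norm_num)
      (hfar 1 3 le_rfl (by omega) (by norm_num) (by omega) (by omega)))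
  have h11 := apply_one_one_eq_of_commute rfl hb hc h00 h20 <| by
    simpa only [Commute, SemiconjBy, loc3_three_one] using
      loc3_mul_loc3_eq_of_castLE (by omega : 3 ≤ n + 1) le_rfl le_rfl
        (hcomm 1 le_rfl (by omega))
  have h12 := apply_one_two_eq_of_braid rfl hb h11 <|
    loc3_mul_loc3_mul_loc3_eq_of_castLE (by omega : 4 ≤ n + 1) (by norm_num) (by norm_num)
      (by norm_num) (by norm_num) (hbraid 1 le_rfl (by omega))
  exact ⟨h00, h01, h02, h20, h21, h22, h11, h12⟩
end

section
/- Let n ≥ 4 and let m₂₃, m₃₂ ∈ ℂ with m₂₃·m₃₂ ≠ 0. Put M = [[1,0,0],[0,0,m₂₃],[0,m₃₂,1−m₂₃m₃₂]] and let N = (n_{pq}) be a 3×3 complex matrix. If the pair (M,N) satisfies the SMₙ mixed relations on M_{n+1}(ℂ), then n₁₁ = 1, n₁₂ = n₁₃ = n₂₁ = n₃₁ = 0, and: if m₂₃m₃₂ = 1 then n₃₂ = n₂₃/m₂₃² and n₃₃ = n₂₂; if m₂₃m₃₂ ≠ 1 then n₂₃ = m₂₃(1 − n₂₂), n₃₂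 = m₃₂(1 − n₂₂), and n₃₃ = m₂₃m₃₂(n₂₂ − 1) + 1. -/
open Matrix

namespace SM13Aux

/-- `A` agrees with the identity outside the top-left 4×4 corner. -/
def Good {m : ℕ} (A : Matrix (Fin m) (Fin m) ℂ) : Prop :=
  ∀ r s : Fin m, 4 ≤ (r : ℕ) ∨ 4 ≤ (s : ℕ) → A r s = if r = s then 1 else 0

theorem good_loc3 {m : ℕ} (i : ℕ) (hi : i ≤ 2) (P : Matrix (Fin 3) (Fin 3) ℂ) :
    Good (loc3 m i P) := by
  intro r s hrs
  simp only [loc3, Matrix.of_apply]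
  rw [if_neg (by omega), if_neg (by omega), if_neg (by omega), if_neg (by omega),
    if_neg (by omega), if_neg (by omega), if_neg (by omega), if_neg (by omega),
    if_neg (by omega)]

theorem good_mul {m : ℕ} {A B : Matrix (Fin m) (Fin m) ℂ} (hA : Good A) (hB : Good B) :
    Good (A * B) := by
  intro r s hrs
  rw [Matrix.mul_apply]
  rcases hrs with hr | hs
  · have h1 : ∀ k, A r k = if r = k then 1 else 0 := fun k => hA r k (Or.inl hr)
    simp only [h1, ite_mul, one_mul, zero_mul, Finset.sum_ite_eq, Finset.mem_univ, if_true]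
    exact hB r s (Or.inl hr)
  · have h1 : ∀ k, B k s = if k = s then 1 else 0 := fun k => hB k s (Or.inr hs)
    simp only [h1, mul_ite, mul_one, mul_zero, Finset.sum_ite_eq', Finset.mem_univ, if_true]
    exact hA r s (Or.inr hs)

theorem corner_mul {m : ℕ} (hm : 4 ≤ m) {A B : Matrix (Fin m) (Fin m) ℂ}
    (hA : Good A) (hB : Good B) :
    (A * B).submatrix (Fin.castLE hm) (Fin.castLE hm)
      = A.submatrix (Fin.castLE hm) (Fin.castLE hm)
        * B.submatrix (Fin.castLE hm) (Fin.castLE hm) := by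
  ext r s
  simp only [Matrix.submatrix_apply, Matrix.mul_apply]
  rw [← Finset.sum_subset
    (Finset.subset_univ ((Finset.univ : Finset (Fin 4)).map (Fin.castLEEmb hm))) ?_]
  · rw [Finset.sum_map]
    simp [Fin.castLEEmb]
  intro k _ hk
  have hk4 : 4 ≤ (k : ℕ) := by
    by_contra hlt
    exact hk (Finset.mem_map.2 ⟨⟨(k : ℕ), by omega⟩, Finset.mem_univ _, by
      simp [Fin.castLEEmb, Fin.ext_iff]⟩)
  rw [hA (Fin.castLE hm r) k (Or.inr hk4), if_neg, zero_mul]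
  intro hrk
  have : ((Fin.castLE hm r : Fin m) : ℕ) = (k : ℕ) := by rw [hrk]
  simp only [Fin.coe_castLE] at this
  omega

theorem loc3_corner {m : ℕ} (hm : 4 ≤ m) (i : ℕ) (P : Matrix (Fin 3) (Fin 3) ℂ) :
    (loc3 m i P).submatrix (Fin.castLE hm) (Fin.castLE hm) = loc3 4 i P := by
  ext r s
  simp only [Matrix.submatrix_apply, loc3, Matrix.of_apply, Fin.coe_castLE, Fin.castLE_inj]

end SM13Aux

open SM13Aux in
theorem stmt13 (n : ℕ) (hn : 4 ≤ n) (m23 m32 : ℂ) (hm : m23 * m32 ≠ 0)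
    (N : Matrix (Fin 3) (Fin 3) ℂ)
    (h : SMRel3 n !![1, 0, 0; 0, 0, m23; 0, m32, 1 - m23 * m32] N) :
    N 0 0 = 1 ∧ N 0 1 = 0 ∧ N 0 2 = 0 ∧ N 1 0 = 0 ∧ N 2 0 = 0 ∧
    (m23 * m32 = 1 → N 2 1 = N 1 2 / m23 ^ 2 ∧ N 2 2 = N 1 1) ∧
    (m23 * m32 ≠ 1 → N 1 2 = m23 * (1 - N 1 1) ∧
      N 2 1 = m32 * (1 - N 1 1) ∧
      N 2 2 = m23 * m32 * (N 1 1 - 1) + 1) := by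
  have ha : m23 ≠ 0 := left_ne_zero_of_mul hm
  have hb : m32 ≠ 0 := right_ne_zero_of_mul hm
  set M : Matrix (Fin 3) (Fin 3) ℂ := !![1, 0, 0; 0, 0, m23; 0, m32, 1 - m23 * m32] with hM
  have hm4 : 4 ≤ n + 1 := by omega
  have gM1 : Good (loc3 (n+1) 1 M) := good_loc3 1 (by omega) M
  have gM2 : Good (loc3 (n+1) 2 M) := good_loc3 2 (by omega) M
  have gN1 : Good (loc3 (n+1) 1 N) := good_loc3 1 (by omega) N
  have gN2 : Good (loc3 (n+1) 2 N) := good_loc3 2 (by omega) N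
  -- the three relation instances we need
  have hst := h.2.2.1 1 le_rfl (by omega)
  have hbr := h.2.2.2.1 1 le_rfl (by omega)
  have hrb := h.2.2.2.2 1 le_rfl (by omega)
  -- pass to 4×4 corners
  have cst : loc3 4 1 M * loc3 4 1 N = loc3 4 1 N * loc3 4 1 M := by
    have := congrArg (fun X => X.submatrix (Fin.castLE hm4) (Fin.castLE hm4)) hst
    simpa only [corner_mul hm4 gM1 gN1, corner_mul hm4 gN1 gM1, loc3_corner hm4] using this
  have cbr : loc3 4 1 M * loc3 4 2 M * loc3 4 1 N = loc3 4 2 N * loc3 4 1 M * loc3 4 2 M := by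
    have := congrArg (fun X => X.submatrix (Fin.castLE hm4) (Fin.castLE hm4)) hbr
    simpa only [corner_mul hm4 (good_mul gM1 gM2) gN1, corner_mul hm4 gM1 gM2,
      corner_mul hm4 (good_mul gN2 gM1) gM2, corner_mul hm4 gN2 gM1,
      loc3_corner hm4] using this
  have crb : loc3 4 2 M * loc3 4 1 M * loc3 4 2 N = loc3 4 1 N * loc3 4 2 M * loc3 4 1 M := by
    have := congrArg (fun X => X.submatrix (Fin.castLE hm4) (Fin.castLE hm4)) hrb
    simpa only [corner_mul hm4 (good_mul gM2 gM1) gN2, corner_mul hm4 gM2 gM1,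
      corner_mul hm4 (good_mul gN1 gM2) gM1, corner_mul hm4 gN1 gM2,
      loc3_corner hm4] using this
  have est := Matrix.ext_iff.mpr cst
  have ebr := Matrix.ext_iff.mpr cbr
  have erb := Matrix.ext_iff.mpr crb
  -- extract the scalar equations
  have q1 := est 1 1
  have q2 := est 1 2
  have q3 := ebr 0 0
  have q4 := ebr 0 1
  have q5 := ebr 0 2
  have q6 := ebr 2 3
  have q7 := erb 1 0
  have q8 := erb 2 0
  simp (config := { decide := true }) [loc3, Matrix.mul_apply, Fin.sum_univ_four, hM] at q1 q2 q3 q4 q5 q6 q7 q8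
  refine ⟨q3, q4, q5, q7.symm, q8.symm, ?_, ?_⟩
  · intro h1
    refine ⟨?_, ?_⟩
    · field_simp
      linear_combination m23 * q1 + N 1 2 * h1
    · have hz : m23 * (N 2 2 - N 1 1) = 0 := by linear_combination q2 - N 1 2 * h1
      have := (mul_eq_zero.1 hz).resolve_left ha
      exact sub_eq_zero.1 this
  · intro h2
    have hfac : (m23 * m32 - 1) * (N 1 2 - m23 * (1 - N 1 1)) = 0 := by
      linear_combination q6 - m23 ^ 2 * q7
    have h23 : N 1 2 = m23 * (1 - N 1 1) :=
      sub_eq_zero.1 ((mul_eq_zero.1 hfac).resolve_left (sub_ne_zero.2 h2))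
    refine ⟨h23, ?_, ?_⟩
    · have hz : m23 * N 2 1 = m23 * (m32 * (1 - N 1 1)) := by
        linear_combination q1 + m32 * h23
      exact mul_left_cancel₀ ha hz
    · have hz : m23 * N 2 2 = m23 * (m23 * m32 * (N 1 1 - 1) + 1) := by
        linear_combination q2 + (1 - m23 * m32) * h23
      exact mul_left_cancel₀ ha hz
end

section
/- Let n ≥ 4 and let m₁₂, m₂₁ ∈ ℂ with m₁₂·m₂₁ ≠ 0. Put M = [[1−m₁₂m₂₁,m₁₂,0],[m₂₁,0,0],[0,0,1]] and let N = (n_{pq}) be a 3×3 complex matrix. If the pair (M,N) satisfies the SMₙ mixed relations on M_{n+1}(ℂ), then n₁₃ = n₂₃ = n₃₁ = n₃₂ = 0, n₃₃ = 1, and: if m₁₂m₂₁ = 1 then n₁₁ = n₂₂ and n₂₁ = n₁₂/m₁₂²; if m₁₂m₂₁ ≠ 1 then n₁₁ = m₁₂m₂₁(n₂₂ − 1) + 1, n₁₂ = m₁₂(1 − n₂₂), and n₂₁ = m₂₁(1 − n₂₂). -/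
open Matrix Finset

lemma loc3_blk {m : ℕ} (i : ℕ) (hi : i ≤ 3) (P : Matrix (Fin 3) (Fin 3) ℂ)
    (r k : Fin m) (hr : (r:ℕ) < 5) (hk : 5 ≤ (k:ℕ)) : loc3 m i P r k = 0 := by
  simp only [loc3, Matrix.of_apply]
  rw [if_neg (by omega), if_neg (by omega), if_neg (by omega), if_neg (by omega),
      if_neg (by omega), if_neg (by omega), if_neg (by omega), if_neg (by omega),
      if_neg (by omega), if_neg (fun h => absurd (congrArg Fin.val h) (by omega))]

lemma res_loc3 {m : ℕ} (hm : 5 ≤ m) (i : ℕ) (P : Matrix (Fin 3) (Fin 3) ℂ) :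
    (loc3 m i P).submatrix (Fin.castLE hm) (Fin.castLE hm) = loc3 5 i P := by
  ext r s
  simp only [submatrix_apply, loc3, of_apply, Fin.coe_castLE, Fin.castLE_inj]

lemma res_mul {m : ℕ} (hm : 5 ≤ m) (A B : Matrix (Fin m) (Fin m) ℂ)
    (hA : ∀ r k : Fin m, (r:ℕ) < 5 → 5 ≤ (k:ℕ) → A r k = 0) :
    (A * B).submatrix (Fin.castLE hm) (Fin.castLE hm)
      = A.submatrix (Fin.castLE hm) (Fin.castLE hm) * B.submatrix (Fin.castLE hm) (Fin.castLE hm) := by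
  ext r s
  simp only [submatrix_apply, Matrix.mul_apply]
  calc ∑ k : Fin m, A (Fin.castLE hm r) k * B k (Fin.castLE hm s)
      = ∑ k ∈ (univ : Finset (Fin 5)).map (Fin.castLEEmb hm),
          A (Fin.castLE hm r) k * B k (Fin.castLE hm s) := by
        refine (Finset.sum_subset (Finset.subset_univ _) ?_).symm
        intro k _ hk
        have h5 : 5 ≤ (k : ℕ) := by
          by_contra h'
          exact hk (Finset.mem_map.mpr ⟨⟨(k:ℕ), by omega⟩, Finset.mem_univ _, Fin.ext rfl⟩)
        rw [hA _ _ (by simp) h5, zero_mul]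
    _ = ∑ k : Fin 5, A (Fin.castLE hm r) (Fin.castLE hm k) * B (Fin.castLE hm k) (Fin.castLE hm s) := by
        rw [Finset.sum_map]; rfl

lemma blk_mul {m : ℕ} (A B : Matrix (Fin m) (Fin m) ℂ)
    (hA : ∀ r k : Fin m, (r:ℕ) < 5 → 5 ≤ (k:ℕ) → A r k = 0)
    (hB : ∀ r k : Fin m, (r:ℕ) < 5 → 5 ≤ (k:ℕ) → B r k = 0) :
    ∀ r k : Fin m, (r:ℕ) < 5 → 5 ≤ (k:ℕ) → (A * B) r k = 0 := by
  intro r k hr hk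
  rw [Matrix.mul_apply]
  refine Finset.sum_eq_zero fun l _ => ?_
  by_cases hl : (l : ℕ) < 5
  · rw [hB _ _ hl hk, mul_zero]
  · rw [hA _ _ hr (by omega), zero_mul]

lemma res2 {m : ℕ} (hm : 5 ≤ m) (i j : ℕ) (hi : i ≤ 3) (hj : j ≤ 3)
    (P Q : Matrix (Fin 3) (Fin 3) ℂ)
    (H : loc3 m i P * loc3 m j Q = loc3 m j Q * loc3 m i P) :
    loc3 5 i P * loc3 5 j Q = loc3 5 j Q * loc3 5 i P := by
  have := congrArg (fun X => X.submatrix (Fin.castLE hm) (Fin.castLE hm)) H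
  simpa only [res_mul hm _ _ (loc3_blk i hi P), res_mul hm _ _ (loc3_blk j hj Q),
    res_loc3] using this

lemma res3 {m : ℕ} (hm : 5 ≤ m) (i j k i' j' k' : ℕ) (hi : i ≤ 3) (hj : j ≤ 3)
    (hi' : i' ≤ 3) (hj' : j' ≤ 3)
    (P Q R P' Q' R' : Matrix (Fin 3) (Fin 3) ℂ)
    (H : loc3 m i P * loc3 m j Q * loc3 m k R = loc3 m i' P' * loc3 m j' Q' * loc3 m k' R') :
    loc3 5 i P * loc3 5 j Q * loc3 5 k R = loc3 5 i' P' * loc3 5 j' Q' * loc3 5 k' R' := by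
  have := congrArg (fun X => X.submatrix (Fin.castLE hm) (Fin.castLE hm)) H
  simpa only [res_mul hm _ _ (blk_mul _ _ (loc3_blk i hi P) (loc3_blk j hj Q)),
    res_mul hm _ _ (blk_mul _ _ (loc3_blk i' hi' P') (loc3_blk j' hj' Q')),
    res_mul hm _ _ (loc3_blk i hi P), res_mul hm _ _ (loc3_blk i' hi' P'),
    res_loc3] using this

lemma loc3_one (P : Matrix (Fin 3) (Fin 3) ℂ) :
    loc3 5 1 P = !![P 0 0, P 0 1, P 0 2, 0, 0;
                    P 1 0, P 1 1, P 1 2, 0, 0;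
                    P 2 0, P 2 1, P 2 2, 0, 0;
                    0, 0, 0, 1, 0;
                    0, 0, 0, 0, 1] := by
  ext r s; fin_cases r <;> fin_cases s <;> rfl

lemma loc3_two (P : Matrix (Fin 3) (Fin 3) ℂ) :
    loc3 5 2 P = !![1, 0, 0, 0, 0;
                    0, P 0 0, P 0 1, P 0 2, 0;
                    0, P 1 0, P 1 1, P 1 2, 0;
                    0, P 2 0, P 2 1, P 2 2, 0;
                    0, 0, 0, 0, 1] := by
  ext r s; fin_cases r <;> fin_cases s <;> rfl

set_option maxHeartbeats 2000000 in
theorem stmt14 (n : ℕ) (hn : 4 ≤ n) (m12 m21 : ℂ) (hm : m12 * m21 ≠ 0)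
    (N : Matrix (Fin 3) (Fin 3) ℂ)
    (h : SMRel3 n !![1 - m12 * m21, m12, 0; m21, 0, 0; 0, 0, 1] N) :
    N 0 2 = 0 ∧ N 1 2 = 0 ∧ N 2 0 = 0 ∧ N 2 1 = 0 ∧ N 2 2 = 1 ∧
    (m12 * m21 = 1 → N 0 0 = N 1 1 ∧ N 1 0 = N 0 1 / m12 ^ 2) ∧
    (m12 * m21 ≠ 1 → N 0 0 = m12 * m21 * (N 1 1 - 1) + 1 ∧
      N 0 1 = m12 * (1 - N 1 1) ∧
      N 1 0 = m21 * (1 - N 1 1)) := by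
  obtain ⟨-, -, hc, hA, hB⟩ := h
  have hm5 : 5 ≤ n + 1 := by omega
  have Hc := res2 hm5 1 1 (by norm_num) (by norm_num) _ _ (hc 1 le_rfl (by omega))
  have HA := res3 hm5 1 2 1 2 1 2 (by norm_num) (by norm_num) (by norm_num) (by norm_num)
    _ _ _ _ _ _ (hA 1 le_rfl (by omega))
  have HB := res3 hm5 2 1 2 1 2 1 (by norm_num) (by norm_num) (by norm_num) (by norm_num)
    _ _ _ _ _ _ (hB 1 le_rfl (by omega))
  simp only [loc3_one, loc3_two] at Hc HA HB
  have e1 := congrFun (congrFun Hc 0) 0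
  have e2 := congrFun (congrFun Hc 0) 1
  have z02 := congrFun (congrFun HA 1) 3
  have z12 := congrFun (congrFun HA 2) 3
  have eA := congrFun (congrFun HA 0) 0
  have z20 := congrFun (congrFun HB 3) 1
  have z21 := congrFun (congrFun HB 3) 2
  have z22 := congrFun (congrFun HB 3) 3
  have eB := congrFun (congrFun HB 1) 0
  simp [Matrix.mul_apply, Fin.sum_univ_five, Matrix.vecHead, Matrix.vecTail] at e1 e2
  simp [Matrix.mul_apply, Fin.sum_univ_five, Matrix.vecHead, Matrix.vecTail] at z02 z12 eA
  simp [Matrix.mul_apply, Fin.sum_univ_five, Matrix.vecHead, Matrix.vecTail] at z20 z21 z22 eB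
  clear Hc HA HB
  have ha : m12 ≠ 0 := left_ne_zero_of_mul hm
  have hb : m21 ≠ 0 := right_ne_zero_of_mul hm
  refine ⟨z02.symm, z12.symm, z20, z21, z22, fun h1 => ⟨?_, ?_⟩, fun h1 => ?_⟩
  · exact mul_left_cancel₀ ha (by linear_combination (-1 : ℂ) * e2 - N 0 1 * h1)
  · rw [eq_div_iff (pow_ne_zero 2 ha)]
    linear_combination m12 * e1 + N 0 1 * h1
  · have h1' : (1 : ℂ) - m12 * m21 ≠ 0 := sub_ne_zero.mpr (Ne.symm h1)
    have k1 : (1 - m12 * m21) * (m21 * (1 - N 1 1) - N 1 0) = 0 := by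
      linear_combination eB - m21 ^ 2 * z12
    have hn10 : N 1 0 = m21 * (1 - N 1 1) := by
      have := (mul_eq_zero.mp k1).resolve_left h1'
      linear_combination -this
    have hn01 : N 0 1 = m12 * (1 - N 1 1) := by
      refine mul_left_cancel₀ hb ?_
      linear_combination (-1 : ℂ) * e1 + m12 * hn10
    have k2 : (1 - m12 * m21) * (N 0 0 - (m12 * m21 * (N 1 1 - 1) + 1)) = 0 := by
      linear_combination eA - (m12 * (1 - m12 * m21)) * hn10 - m12 ^ 2 * z20
    have hn00 : N 0 0 = m12 * m21 * (N 1 1 - 1) + 1 := by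
      have := (mul_eq_zero.mp k2).resolve_left h1'
      linear_combination this
    exact ⟨hn00, hn01, hn10⟩
end

section
/- Let n ≥ 4 and let m₁₂, m₂₁ ∈ ℂ with m₁₂·m₂₁ ≠ 0. Put M = [[0,m₁₂,0],[m₂₁,0,0],[0,0,1]] and let N = (n_{pq}) be a 3×3 complex matrix. If the pair (M,N) satisfies the SMₙ mixed relations on M_{n+1}(ℂ), then n₁₃ = n₂₃ = n₃₁ = n₃₂ = 0, n₃₃ = 1, n₂₁ = m₂₁n₁₂/m₁₂, and n₂₂ = n₁₁. -/
/-!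
The commuting generators `τ₁ = L₁(N)` and `σ₃ = L₃(M)` overlap in a single index, where `M`
has the diagonal entry `0` and the nonzero `m₁₂` to its right; comparing entries of
`τ₁σ₃ = σ₃τ₁` along that row and column forces the third row and column of `N` to be those of
the identity. The relation `σ₁τ₁ = τ₁σ₁` is `L₁(MN) = L₁(NM)`, hence `MN = NM`, and the
antidiagonal `2 × 2` block of `M` then gives the remaining two equations.
-/

open Matrix

/-- `loc3 m (j + 1)` puts the block at rows and columns `j, j + 1, j + 2`; indexing by `j + 1`
avoids the truncated subtraction `i - 1` of the definition. -/
lemma loc3_succ_apply (m j : ℕ) (P : Matrix (Fin 3) (Fin 3) ℂ) (r s : Fin m) :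
    loc3 m (j + 1) P r s =
      if h : j ≤ r ∧ (r : ℕ) < j + 3 ∧ j ≤ s ∧ (s : ℕ) < j + 3 then
        P ⟨r - j, by omega⟩ ⟨s - j, by omega⟩
      else (1 : Matrix (Fin m) (Fin m) ℂ) r s := by
  simp only [loc3, of_apply, one_apply, Nat.add_sub_cancel, Fin.ext_iff]
  split_ifs <;> first | omega | rfl | (congr 1 <;> ext <;> simp <;> omega)

section Block

variable {m j : ℕ} (P : Matrix (Fin 3) (Fin 3) ℂ)

lemma loc3_succ_apply_of_row_notMem {r : Fin m} (hr : (r : ℕ) < j ∨ j + 3 ≤ r) (s : Fin m) :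
    loc3 m (j + 1) P r s = (1 : Matrix (Fin m) (Fin m) ℂ) r s := by
  rw [loc3_succ_apply, dif_neg (by omega)]

lemma loc3_succ_apply_of_col_notMem (r : Fin m) {s : Fin m} (hs : (s : ℕ) < j ∨ j + 3 ≤ s) :
    loc3 m (j + 1) P r s = (1 : Matrix (Fin m) (Fin m) ℂ) r s := by
  rw [loc3_succ_apply, dif_neg (by omega)]

lemma loc3_succ_mul_apply_of_row_notMem (A : Matrix (Fin m) (Fin m) ℂ) {r : Fin m}
    (hr : (r : ℕ) < j ∨ j + 3 ≤ r) (s : Fin m) : (loc3 m (j + 1) P * A) r s = A r s := by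
  simp_rw [mul_apply, loc3_succ_apply_of_row_notMem P hr, ← mul_apply, one_mul]

lemma mul_loc3_succ_apply_of_col_notMem (A : Matrix (Fin m) (Fin m) ℂ) (r : Fin m) {s : Fin m}
    (hs : (s : ℕ) < j ∨ j + 3 ≤ s) : (A * loc3 m (j + 1) P) r s = A r s := by
  simp_rw [mul_apply, loc3_succ_apply_of_col_notMem P _ hs, ← mul_apply, mul_one]

variable (hjm : j + 3 ≤ m)

def blockIndex (p : Fin 3) : Fin m := ⟨j + p, by omega⟩

lemma blockIndex_injective : Function.Injective (blockIndex hjm) := by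
  intro p q hpq
  simpa [blockIndex, Fin.ext_iff] using hpq

lemma exists_blockIndex_eq_or (r : Fin m) :
    (∃ p, blockIndex hjm p = r) ∨ (r : ℕ) < j ∨ j + 3 ≤ r := by
  by_cases hr : (r : ℕ) < j ∨ j + 3 ≤ r
  · exact Or.inr hr
  · exact Or.inl ⟨⟨r - j, by omega⟩, Fin.ext (by simp [blockIndex]; omega)⟩

lemma blockIndex_ne {r : Fin m} (hr : (r : ℕ) < j ∨ j + 3 ≤ r) (p : Fin 3) :
    blockIndex hjm p ≠ r := by
  simp only [blockIndex, ne_eq, Fin.ext_iff]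
  omega

lemma sum_eq_sum_blockIndex (f : Fin m → ℂ)
    (hf : ∀ k : Fin m, (k : ℕ) < j ∨ j + 3 ≤ k → f k = 0) :
    ∑ k, f k = ∑ p, f (blockIndex hjm p) := by
  refine (Fintype.sum_of_injective _ (blockIndex_injective hjm) _ _ ?_ fun _ => rfl).symm
  intro k hk
  rcases exists_blockIndex_eq_or hjm k with hk' | hk'
  · exact absurd hk' hk
  · exact hf k hk'

lemma loc3_succ_apply_blockIndex (p q : Fin 3) :
    loc3 m (j + 1) P (blockIndex hjm p) (blockIndex hjm q) = P p q := by
  simp [loc3_succ_apply, blockIndex]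

include hjm in
lemma loc3_succ_injective : Function.Injective (loc3 m (j + 1)) := by
  intro P Q hPQ
  ext p q
  rw [← loc3_succ_apply_blockIndex P hjm, ← loc3_succ_apply_blockIndex Q hjm, hPQ]

lemma mul_loc3_succ_apply_blockIndex (A : Matrix (Fin m) (Fin m) ℂ) (r : Fin m) (q : Fin 3) :
    (A * loc3 m (j + 1) P) r (blockIndex hjm q) = ∑ p, A r (blockIndex hjm p) * P p q := by
  rw [mul_apply, sum_eq_sum_blockIndex hjm]
  · simp_rw [loc3_succ_apply_blockIndex]
  · intro k hk
    rw [loc3_succ_apply_of_row_notMem P hk, one_apply_ne (blockIndex_ne hjm hk q).symm, mul_zero]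

lemma loc3_succ_mul_apply_blockIndex (A : Matrix (Fin m) (Fin m) ℂ) (p : Fin 3) (s : Fin m) :
    (loc3 m (j + 1) P * A) (blockIndex hjm p) s = ∑ q, P p q * A (blockIndex hjm q) s := by
  rw [mul_apply, sum_eq_sum_blockIndex hjm]
  · simp_rw [loc3_succ_apply_blockIndex]
  · intro k hk
    rw [loc3_succ_apply_of_col_notMem P _ hk, one_apply_ne (blockIndex_ne hjm hk p), zero_mul]

include hjm in
lemma loc3_succ_mul_loc3_succ (Q : Matrix (Fin 3) (Fin 3) ℂ) :
    loc3 m (j + 1) P * loc3 m (j + 1) Q = loc3 m (j + 1) (P * Q) := by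
  ext r s
  rcases exists_blockIndex_eq_or hjm s with ⟨q, rfl⟩ | hs
  · rw [mul_loc3_succ_apply_blockIndex]
    rcases exists_blockIndex_eq_or hjm r with ⟨p, rfl⟩ | hr
    · simp_rw [loc3_succ_apply_blockIndex, mul_apply]
    · simp_rw [loc3_succ_apply_of_row_notMem _ hr, one_apply_ne (blockIndex_ne hjm hr _).symm,
        zero_mul, Finset.sum_const_zero]
  · rw [mul_loc3_succ_apply_of_col_notMem _ _ _ hs, loc3_succ_apply_of_col_notMem _ _ hs,
      loc3_succ_apply_of_col_notMem _ _ hs]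

end Block

lemma third_row_col_eq_of_loc3_commute {m j : ℕ} (hjm : j + 5 ≤ m)
    (P Q : Matrix (Fin 3) (Fin 3) ℂ) (hQ₀₀ : Q 0 0 = 0) (hQ₀₁ : Q 0 1 ≠ 0)
    (hc : loc3 m (j + 1) P * loc3 m (j + 3) Q = loc3 m (j + 3) Q * loc3 m (j + 1) P) :
    P 0 2 = 0 ∧ P 1 2 = 0 ∧ P 2 0 = 0 ∧ P 2 1 = 0 ∧ P 2 2 = 1 := by
  have hP : j + 3 ≤ m := by omega
  have hQ : j + 2 + 3 ≤ m := hjm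
  -- the blocks overlap in index `j + 2`: the last index of `P`'s block, the first of `Q`'s
  have hc' : loc3 m (j + 1) P * loc3 m (j + 2 + 1) Q
      = loc3 m (j + 2 + 1) Q * loc3 m (j + 1) P := hc
  have col (p : Fin 3) (hp : (p : ℕ) < 2) : P p 2 * Q 0 0 = P p 2 := by
    have e := congrFun (congrFun hc' (blockIndex hP p)) (blockIndex hQ 0)
    rw [mul_loc3_succ_apply_blockIndex, loc3_succ_mul_apply_of_row_notMem,
      Fin.sum_univ_three] at e
    · simpa [loc3_succ_apply, blockIndex, one_apply, Fin.ext_iff, add_assoc,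
        show (p : ℕ) ≠ 3 by omega, show (p : ℕ) ≠ 4 by omega] using e
    · simp only [blockIndex]
      omega
  have row (p : Fin 3) (hp : (p : ℕ) < 2) : Q 0 0 * P 2 p = P 2 p := by
    have e := congrFun (congrFun hc' (blockIndex hQ 0)) (blockIndex hP p)
    rw [mul_loc3_succ_apply_of_col_notMem, loc3_succ_mul_apply_blockIndex,
      Fin.sum_univ_three] at e
    · simpa [loc3_succ_apply, blockIndex, one_apply, Fin.ext_iff, add_assoc,
        show 3 ≠ (p : ℕ) by omega, show 4 ≠ (p : ℕ) by omega] using e.symm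
    · simp only [blockIndex]
      omega
  have corner : P 2 2 * Q 0 1 = Q 0 1 := by
    have e := congrFun (congrFun hc' (blockIndex hQ 0)) (blockIndex hQ 1)
    rw [mul_loc3_succ_apply_blockIndex, loc3_succ_mul_apply_blockIndex, Fin.sum_univ_three,
      Fin.sum_univ_three] at e
    simpa [loc3_succ_apply, blockIndex] using e
  simp only [hQ₀₀, mul_zero, zero_mul] at col row
  exact ⟨(col 0 (by decide)).symm, (col 1 (by decide)).symm, (row 0 (by decide)).symm,
    (row 1 (by decide)).symm, (mul_eq_right₀ hQ₀₁).mp corner⟩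

lemma apply_eq_of_commute_antidiag {a b : ℂ} (ha : a ≠ 0) (N : Matrix (Fin 3) (Fin 3) ℂ)
    (hc : !![0, a, 0; b, 0, 0; 0, 0, 1] * N = N * !![0, a, 0; b, 0, 0; 0, 0, 1]) :
    N 1 0 = b * N 0 1 / a ∧ N 1 1 = N 0 0 := by
  have e₀₀ : a * N 1 0 = N 0 1 * b := by
    simpa [mul_apply, Fin.sum_univ_three] using congrFun (congrFun hc 0) 0
  have e₀₁ : a * N 1 1 = N 0 0 * a := by
    simpa [mul_apply, Fin.sum_univ_three] using congrFun (congrFun hc 0) 1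
  refine ⟨by rw [eq_div_iff ha]; linear_combination e₀₀, mul_left_cancel₀ ha ?_⟩
  linear_combination e₀₁

theorem stmt16 (n : ℕ) (hn : 4 ≤ n) (m12 m21 : ℂ) (hm : m12 * m21 ≠ 0)
    (N : Matrix (Fin 3) (Fin 3) ℂ)
    (h : SMRel3 n !![0, m12, 0; m21, 0, 0; 0, 0, 1] N) :
    N 0 2 = 0 ∧ N 1 2 = 0 ∧ N 2 0 = 0 ∧ N 2 1 = 0 ∧ N 2 2 = 1 ∧
    N 1 0 = m21 * N 0 1 / m12 ∧ N 1 1 = N 0 0 := by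
  have hm12 : m12 ≠ 0 := left_ne_zero_of_mul hm
  have hτσ : loc3 (n + 1) (0 + 1) N * loc3 (n + 1) (0 + 3) !![0, m12, 0; m21, 0, 0; 0, 0, 1]
      = loc3 (n + 1) (0 + 3) !![0, m12, 0; m21, 0, 0; 0, 0, 1] * loc3 (n + 1) (0 + 1) N :=
    h.2.1 1 3 le_rfl (by omega) (by omega) (by omega) (Or.inl le_rfl)
  have hστ : loc3 (n + 1) (0 + 1) !![0, m12, 0; m21, 0, 0; 0, 0, 1] * loc3 (n + 1) (0 + 1) N
      = loc3 (n + 1) (0 + 1) N * loc3 (n + 1) (0 + 1) !![0, m12, 0; m21, 0, 0; 0, 0, 1] :=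
    h.2.2.1 1 le_rfl (by omega)
  rw [loc3_succ_mul_loc3_succ _ (by omega), loc3_succ_mul_loc3_succ _ (by omega)] at hστ
  obtain ⟨h02, h12, h20, h21, h22⟩ :=
    third_row_col_eq_of_loc3_commute (by omega) N _ (by simp) (by simpa using hm12) hτσ
  exact ⟨h02, h12, h20, h21, h22,
    apply_eq_of_commute_antidiag hm12 N (loc3_succ_injective (by omega) hστ)⟩
end

section
/- Let n ≥ 4 and let m₂₂, m₃₂ ∈ ℂ with m₂₂·m₃₂ ≠ 0, and put M = [[1,−m₂₂/m₃₂,0],[0,m₂₂,0],[0,m₃₂,1]]. Then M is invertible, and the matrices σᵢ = Lᵢ(M) ∈ M_{n+1}(ℂ), 1 ≤ i ≤ n−1, satisfy the braid relations: σᵢσⱼ = σⱼσᵢ whenever |i−j| ≥ 2, and σᵢσ_{i+1}σᵢ = σ_{i+1}σᵢσ_{i+1} for 1 ≤ i ≤ n−2. (Hence σᵢ ↦ Lᵢ(M) defines a homogeneous 3-local representation of Bₙ; the choice m₂₂ = −t, m₃₂ = t recovers the complex specialization of the F-representation.) -/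
open Matrix

namespace Loc3Aux

noncomputable def wv (m i : ℕ) (a b c : ℂ) : Fin m → ℂ := fun r =>
  if (r : ℕ) = i - 1 then a else if (r : ℕ) = i then b - 1 else
  if (r : ℕ) = i + 1 then c else 0

def ev (m i : ℕ) : Fin m → ℂ := fun s => if (s : ℕ) = i then 1 else 0

lemma vecMulVec_mul_vecMulVec {m : ℕ} (u v u' v' : Fin m → ℂ) :
    vecMulVec u v * vecMulVec u' v' = (v ⬝ᵥ u') • vecMulVec u v' := by
  ext r s
  simp [Matrix.mul_apply, vecMulVec_apply, dotProduct, Finset.sum_mul, Finset.mul_sum]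
  congr 1
  ext k
  ring

lemma ev_eq {m i : ℕ} (hi : i < m) : ev m i = Pi.single (⟨i, hi⟩ : Fin m) 1 := by
  funext s
  simp only [ev, Pi.single_apply]
  by_cases h : (s : ℕ) = i
  · have : s = ⟨i, hi⟩ := Fin.ext h
    simp [this]
  · have : s ≠ ⟨i, hi⟩ := by
      intro hs; exact h (by rw [hs])
    simp [h, this]

lemma ev_dot {m i j : ℕ} (hi : i < m) (a b c : ℂ) :
    ev m i ⬝ᵥ wv m j a b c = wv m j a b c ⟨i, hi⟩ := by
  rw [ev_eq hi, single_dotProduct, one_mul]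

set_option maxHeartbeats 2000000 in
lemma loc3_decomp (m i : ℕ) (hi : 1 ≤ i) (_hi2 : i + 1 < m) (a b c : ℂ) :
    loc3 m i !![1, a, 0; 0, b, 0; 0, c, 1] = 1 + vecMulVec (wv m i a b c) (ev m i) := by
  ext r s
  simp only [loc3, of_apply, Matrix.add_apply, Matrix.one_apply, vecMulVec_apply, wv, ev,
    Matrix.cons_val', Matrix.cons_val_zero, Matrix.cons_val_one, Matrix.head_cons,
    Matrix.empty_val', Matrix.cons_val_fin_one, Matrix.head_fin_const,
    Matrix.cons_val_two, Matrix.tail_cons, Fin.ext_iff]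
  split_ifs <;> first | (exfalso; omega) | ring1

lemma wv_at {m i j : ℕ} (hi : i < m) (a b c : ℂ) :
    wv m j a b c ⟨i, hi⟩ =
      if i = j - 1 then a else if i = j then b - 1 else if i = j + 1 then c else 0 := rfl

lemma comm_abc (m i j : ℕ) (hi : 1 ≤ i) (hij : i + 2 ≤ j) (hjm : j + 1 < m) (a b c : ℂ) :
    loc3 m i !![1, a, 0; 0, b, 0; 0, c, 1] * loc3 m j !![1, a, 0; 0, b, 0; 0, c, 1]
      = loc3 m j !![1, a, 0; 0, b, 0; 0, c, 1] * loc3 m i !![1, a, 0; 0, b, 0; 0, c, 1] := by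
  have him : i + 1 < m := by omega
  have hi' : i < m := by omega
  have hj' : j < m := by omega
  rw [loc3_decomp m i hi him, loc3_decomp m j (by omega) hjm]
  set A := vecMulVec (wv m i a b c) (ev m i) with hA
  set B := vecMulVec (wv m j a b c) (ev m j) with hB
  have dij : ev m i ⬝ᵥ wv m j a b c = 0 := by
    rw [ev_dot hi', wv_at hi']
    rw [if_neg (by omega), if_neg (by omega), if_neg (by omega)]
  have dji : ev m j ⬝ᵥ wv m i a b c = 0 := by
    rw [ev_dot hj', wv_at hj']
    rw [if_neg (by omega), if_neg (by omega), if_neg (by omega)]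
  have hAB : A * B = 0 := by rw [hA, hB, vecMulVec_mul_vecMulVec, dij, zero_smul]
  have hBA : B * A = 0 := by rw [hA, hB, vecMulVec_mul_vecMulVec, dji, zero_smul]
  simp only [mul_add, add_mul, one_mul, mul_one, hAB, hBA, add_zero]
  abel

lemma braid_abc (m i : ℕ) (hi : 1 ≤ i) (him : i + 2 < m) (a b c : ℂ) (hac : a * c = -b) :
    loc3 m i !![1, a, 0; 0, b, 0; 0, c, 1] * loc3 m (i + 1) !![1, a, 0; 0, b, 0; 0, c, 1]
        * loc3 m i !![1, a, 0; 0, b, 0; 0, c, 1]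
      = loc3 m (i + 1) !![1, a, 0; 0, b, 0; 0, c, 1] * loc3 m i !![1, a, 0; 0, b, 0; 0, c, 1]
        * loc3 m (i + 1) !![1, a, 0; 0, b, 0; 0, c, 1] := by
  have hi' : i < m := by omega
  have hj' : i + 1 < m := by omega
  rw [loc3_decomp m i hi hj', loc3_decomp m (i + 1) (by omega) (by omega)]
  set A := vecMulVec (wv m i a b c) (ev m i) with hA
  set B := vecMulVec (wv m (i + 1) a b c) (ev m (i + 1)) with hB
  set C := vecMulVec (wv m i a b c) (ev m (i + 1)) with hC
  set D := vecMulVec (wv m (i + 1) a b c) (ev m i) with hD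
  have dii : ev m i ⬝ᵥ wv m i a b c = b - 1 := by
    rw [ev_dot hi', wv_at hi', if_neg (by omega), if_pos rfl]
  have dij : ev m i ⬝ᵥ wv m (i + 1) a b c = a := by
    rw [ev_dot hi', wv_at hi', if_pos (by omega)]
  have dji : ev m (i + 1) ⬝ᵥ wv m i a b c = c := by
    rw [ev_dot hj', wv_at hj', if_neg (by omega), if_neg (by omega), if_pos rfl]
  have djj : ev m (i + 1) ⬝ᵥ wv m (i + 1) a b c = b - 1 := by
    rw [ev_dot hj', wv_at hj', if_neg (by omega), if_pos rfl]
  have hAA : A * A = (b - 1) • A := by rw [hA, vecMulVec_mul_vecMulVec, dii]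
  have hBB : B * B = (b - 1) • B := by rw [hB, vecMulVec_mul_vecMulVec, djj]
  have hAB : A * B = a • C := by rw [hA, hB, hC, vecMulVec_mul_vecMulVec, dij]
  have hBA : B * A = c • D := by rw [hA, hB, hD, vecMulVec_mul_vecMulVec, dji]
  have hCA : C * A = c • A := by rw [hA, hC, vecMulVec_mul_vecMulVec, dji]
  have hCB : C * B = (b - 1) • C := by rw [hB, hC, vecMulVec_mul_vecMulVec, djj]
  have hDA : D * A = (b - 1) • D := by rw [hA, hD, vecMulVec_mul_vecMulVec, dii]
  have hDB : D * B = a • B := by rw [hB, hD, vecMulVec_mul_vecMulVec, dij]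
  simp only [mul_add, add_mul, one_mul, mul_one, smul_mul_assoc, mul_smul_comm,
    hAA, hBB, hAB, hBA, hCA, hCB, hDA, hDB, smul_smul]
  match_scalars <;>
    first
      | ring1
      | (linear_combination hac)
      | (linear_combination -hac)

end Loc3Aux

theorem stmt17 (n : ℕ) (hn : 4 ≤ n) (m22 m32 : ℂ) (hm : m22 * m32 ≠ 0) :
    IsUnit !![1, -m22 / m32, 0; 0, m22, 0; 0, m32, 1] ∧
    (∀ i j : ℕ, 1 ≤ i → i ≤ n - 1 → 1 ≤ j → j ≤ n - 1 →
      (i + 2 ≤ j ∨ j + 2 ≤ i) →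
      loc3 (n + 1) i !![1, -m22 / m32, 0; 0, m22, 0; 0, m32, 1]
          * loc3 (n + 1) j !![1, -m22 / m32, 0; 0, m22, 0; 0, m32, 1]
        = loc3 (n + 1) j !![1, -m22 / m32, 0; 0, m22, 0; 0, m32, 1]
          * loc3 (n + 1) i !![1, -m22 / m32, 0; 0, m22, 0; 0, m32, 1]) ∧
    (∀ i : ℕ, 1 ≤ i → i ≤ n - 2 →
      loc3 (n + 1) i !![1, -m22 / m32, 0; 0, m22, 0; 0, m32, 1]
          * loc3 (n + 1) (i + 1) !![1, -m22 / m32, 0; 0, m22, 0; 0, m32, 1]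
          * loc3 (n + 1) i !![1, -m22 / m32, 0; 0, m22, 0; 0, m32, 1]
        = loc3 (n + 1) (i + 1) !![1, -m22 / m32, 0; 0, m22, 0; 0, m32, 1]
          * loc3 (n + 1) i !![1, -m22 / m32, 0; 0, m22, 0; 0, m32, 1]
          * loc3 (n + 1) (i + 1) !![1, -m22 / m32, 0; 0, m22, 0; 0, m32, 1]) := by
  have hb : m22 ≠ 0 := fun h => hm (by rw [h, zero_mul])
  have hc : m32 ≠ 0 := fun h => hm (by rw [h, mul_zero])
  have hac : (-m22 / m32) * m32 = -m22 := by field_simp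
  refine ⟨?_, ?_, ?_⟩
  · have hdet : (!![1, -m22 / m32, 0; 0, m22, 0; 0, m32, 1]).det = m22 := by
      simp [Matrix.det_fin_three]
    rw [Matrix.isUnit_iff_isUnit_det, hdet]
    exact isUnit_iff_ne_zero.mpr hb
  · intro i j hi hin hj hjn hor
    rcases hor with h | h
    · exact Loc3Aux.comm_abc (n + 1) i j hi h (by omega) _ _ _
    · exact (Loc3Aux.comm_abc (n + 1) j i hj h (by omega) _ _ _).symm
  · intro i hi hin
    exact Loc3Aux.braid_abc (n + 1) i hi (by omega) _ _ _ hac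
end

section
/- Let n ≥ 3 and let a, c ∈ ℂ with c ≠ 0 and a ≠ 1, and put M = [[a, (1−a)/c],[c, 0]]. Then M is invertible, and the matrices σᵢ = Lᵢ(M) ∈ Mₙ(ℂ), 1 ≤ i ≤ n−1, satisfy the braid relations: σᵢσⱼ = σⱼσᵢ whenever |i−j| ≥ 2, and σᵢσ_{i+1}σᵢ = σ_{i+1}σᵢσ_{i+1} for 1 ≤ i ≤ n−2. (Hence σᵢ ↦ Lᵢ(M) defines a homogeneous 2-local representation of Bₙ; the choice a = 1−t, c = 1 recovers the complex specialization of the Burau representation.) -/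
open Matrix

lemma sum2 {n : ℕ} (p q : Fin n) (hpq : p ≠ q) (x y : ℂ) (g : Fin n → ℂ) :
    ∑ k, (if k = p then x else if k = q then y else 0) * g k = x * g p + y * g q := by
  have : ∀ k : Fin n, (if k = p then x else if k = q then y else 0) * g k
      = (if k = p then x * g p else 0) + (if k = q then y * g q else 0) := by
    intro k
    by_cases h1 : k = p
    · subst h1; simp [Ne.symm hpq, hpq]
    · by_cases h2 : k = q <;> simp [h1, h2, Ne.symm hpq]
  simp only [this, Finset.sum_add_distrib, Finset.sum_ite_eq', Finset.mem_univ, if_true]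

lemma sum2' {n : ℕ} (p q : Fin n) (hpq : p ≠ q) (x y : ℂ) (g : Fin n → ℂ) :
    ∑ k, g k * (if k = p then x else if k = q then y else 0) = g p * x + g q * y := by
  have : ∀ k : Fin n, g k * (if k = p then x else if k = q then y else 0)
      = (if k = p then g p * x else 0) + (if k = q then g q * y else 0) := by
    intro k
    by_cases h1 : k = p
    · subst h1; simp [Ne.symm hpq, hpq]
    · by_cases h2 : k = q <;> simp [h1, h2, Ne.symm hpq]
  simp only [this, Finset.sum_add_distrib, Finset.sum_ite_eq', Finset.mem_univ, if_true]

lemma mulL {n i : ℕ} (h1 : 1 ≤ i) (h2 : i < n) (P : Matrix (Fin 2) (Fin 2) ℂ)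
    (B : Matrix (Fin n) (Fin n) ℂ) (r s : Fin n) :
    (loc2 n i P * B) r s =
      if (r : ℕ) = i - 1 then P 0 0 * B ⟨i-1, by omega⟩ s + P 0 1 * B ⟨i, h2⟩ s
      else if (r : ℕ) = i then P 1 0 * B ⟨i-1, by omega⟩ s + P 1 1 * B ⟨i, h2⟩ s
      else B r s := by
  set p : Fin n := ⟨i-1, by omega⟩ with hp
  set q : Fin n := ⟨i, h2⟩ with hq
  have hne : i - 1 ≠ i := by omega
  have hne' : i ≠ i - 1 := by omega
  have hpq : p ≠ q := by simp [hp, hq, Fin.ext_iff]; omega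
  have e1 : ∀ k : Fin n, ((k:ℕ) = i - 1) ↔ (k = p) := fun k => by simp [Fin.ext_iff, hp]
  have e2 : ∀ k : Fin n, ((k:ℕ) = i) ↔ (k = q) := fun k => by simp [Fin.ext_iff, hq]
  rw [Matrix.mul_apply]
  by_cases hr1 : (r:ℕ) = i - 1
  · rw [if_pos hr1]
    have hr2 : ¬((r:ℕ) = i) := by omega
    have hrow : ∀ k : Fin n, loc2 n i P r k = if k = p then P 0 0 else if k = q then P 0 1 else 0 := by
      intro k
      by_cases hk1 : k = p
      · simp [loc2, hr1, hk1, hp, hne]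
      · by_cases hk2 : k = q
        · simp [loc2, hr1, hr2, hk1, hk2, hp, hq, hne, hne', Ne.symm hpq]
        · have hk1' : ¬((k:ℕ) = i - 1) := fun h => hk1 ((e1 k).mp h)
          have hk2' : ¬((k:ℕ) = i) := fun h => hk2 ((e2 k).mp h)
          have hrk : ¬(r = k) := fun h => hk1' (h ▸ hr1)
          simp [loc2, hr1, hr2, hk1, hk2, hk1', hk2', hrk]
    simp only [hrow]
    exact sum2 p q hpq _ _ _
  · rw [if_neg hr1]
    by_cases hr2 : (r:ℕ) = i
    · rw [if_pos hr2]
      have hrow : ∀ k : Fin n, loc2 n i P r k = if k = p then P 1 0 else if k = q then P 1 1 else 0 := by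
        intro k
        by_cases hk1 : k = p
        · simp [loc2, hr1, hr2, hk1, hp, hne, hne']
        · by_cases hk2 : k = q
          · simp [loc2, hr1, hr2, hk1, hk2, hp, hq, hne, hne', Ne.symm hpq]
          · have hk1' : ¬((k:ℕ) = i - 1) := fun h => hk1 ((e1 k).mp h)
            have hk2' : ¬((k:ℕ) = i) := fun h => hk2 ((e2 k).mp h)
            have hrk : ¬(r = k) := fun h => hk2' (h ▸ hr2)
            simp [loc2, hr1, hr2, hk1, hk2, hk1', hk2', hrk]
      simp only [hrow]
      exact sum2 p q hpq _ _ _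
    · rw [if_neg hr2]
      have hrow : ∀ k : Fin n, loc2 n i P r k = if k = r then 1 else 0 := by
        intro k
        by_cases h : k = r
        · subst h; simp [loc2, hr1, hr2]
        · have : ¬(r = k) := fun h' => h h'.symm
          simp [loc2, hr1, hr2, h, this]
      simp only [hrow]
      rw [Finset.sum_congr rfl (fun k _ => by rw [ite_mul, one_mul, zero_mul]),
        Finset.sum_ite_eq' Finset.univ r (fun k => B k s)]
      simp

lemma mulR {n i : ℕ} (h1 : 1 ≤ i) (h2 : i < n) (P : Matrix (Fin 2) (Fin 2) ℂ)
    (B : Matrix (Fin n) (Fin n) ℂ) (r s : Fin n) :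
    (B * loc2 n i P) r s =
      if (s : ℕ) = i - 1 then B r ⟨i-1, by omega⟩ * P 0 0 + B r ⟨i, h2⟩ * P 1 0
      else if (s : ℕ) = i then B r ⟨i-1, by omega⟩ * P 0 1 + B r ⟨i, h2⟩ * P 1 1
      else B r s := by
  set p : Fin n := ⟨i-1, by omega⟩ with hp
  set q : Fin n := ⟨i, h2⟩ with hq
  have hne : i - 1 ≠ i := by omega
  have hne' : i ≠ i - 1 := by omega
  have hpq : p ≠ q := by simp [hp, hq, Fin.ext_iff]; omega
  have e1 : ∀ k : Fin n, ((k:ℕ) = i - 1) ↔ (k = p) := fun k => by simp [Fin.ext_iff, hp]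
  have e2 : ∀ k : Fin n, ((k:ℕ) = i) ↔ (k = q) := fun k => by simp [Fin.ext_iff, hq]
  rw [Matrix.mul_apply]
  by_cases hs1 : (s:ℕ) = i - 1
  · rw [if_pos hs1]
    have hs2 : ¬((s:ℕ) = i) := by omega
    have hcol : ∀ k : Fin n, loc2 n i P k s = if k = p then P 0 0 else if k = q then P 1 0 else 0 := by
      intro k
      by_cases hk1 : k = p
      · simp [loc2, hs1, hs2, hk1, hp, hne, hne']
      · by_cases hk2 : k = q
        · simp [loc2, hs1, hs2, hk1, hk2, hp, hq, hne, hne', Ne.symm hpq]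
        · have hk1' : ¬((k:ℕ) = i - 1) := fun h => hk1 ((e1 k).mp h)
          have hk2' : ¬((k:ℕ) = i) := fun h => hk2 ((e2 k).mp h)
          have hks : ¬(k = s) := fun h => hk1' (h ▸ hs1)
          simp [loc2, hs1, hs2, hk1, hk2, hk1', hk2', hks]
    simp only [hcol]
    exact sum2' p q hpq _ _ _
  · rw [if_neg hs1]
    by_cases hs2 : (s:ℕ) = i
    · rw [if_pos hs2]
      have hcol : ∀ k : Fin n, loc2 n i P k s = if k = p then P 0 1 else if k = q then P 1 1 else 0 := by
        intro k
        by_cases hk1 : k = p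
        · simp [loc2, hs1, hs2, hk1, hp, hne, hne']
        · by_cases hk2 : k = q
          · simp [loc2, hs1, hs2, hk1, hk2, hp, hq, hne, hne', Ne.symm hpq]
          · have hk1' : ¬((k:ℕ) = i - 1) := fun h => hk1 ((e1 k).mp h)
            have hk2' : ¬((k:ℕ) = i) := fun h => hk2 ((e2 k).mp h)
            have hks : ¬(k = s) := fun h => hk2' (h ▸ hs2)
            simp [loc2, hs1, hs2, hk1, hk2, hk1', hk2', hks]
      simp only [hcol]
      exact sum2' p q hpq _ _ _
    · rw [if_neg hs2]
      have hcol : ∀ k : Fin n, loc2 n i P k s = if k = s then 1 else 0 := by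
        intro k
        by_cases h : k = s
        · subst h; simp [loc2, hs1, hs2]
        · simp [loc2, hs1, hs2, h]
      simp only [hcol]
      rw [Finset.sum_congr rfl (fun k _ => by rw [mul_ite, mul_one, mul_zero]),
        Finset.sum_ite_eq' Finset.univ s (fun k => B r k)]
      simp

set_option maxHeartbeats 1000000 in
lemma loc2_comm {n i j : ℕ} (hi : 1 ≤ i) (hjn : j ≤ n - 1) (hij : i + 2 ≤ j) (hn : 3 ≤ n)
    (P Q : Matrix (Fin 2) (Fin 2) ℂ) :
    loc2 n i P * loc2 n j Q = loc2 n j Q * loc2 n i P := by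
  have hi' : i < n := by omega
  have hj : 1 ≤ j := by omega
  have hj' : j < n := by omega
  ext r s
  rw [mulL hi hi', mulL hj hj']
  by_cases hr1 : (r:ℕ) = i - 1 <;> by_cases hr2 : (r:ℕ) = i <;>
    by_cases hr3 : (r:ℕ) = j - 1 <;> by_cases hr4 : (r:ℕ) = j
  all_goals try (exfalso; omega)
  all_goals simp [loc2, Fin.ext_iff, hr1, hr2, hr3, hr4,
        (show i - 1 ≠ j - 1 by omega), (show i - 1 ≠ j by omega),
        (show i ≠ j - 1 by omega), (show i ≠ j by omega),
        (show j - 1 ≠ i - 1 by omega), (show j ≠ i - 1 by omega),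
        (show j - 1 ≠ i by omega), (show j ≠ i by omega)]
  all_goals try split_ifs
  all_goals first | rfl | ring1 | (exfalso; omega)

set_option maxHeartbeats 4000000 in
lemma loc2_braid {n i : ℕ} (hi : 1 ≤ i) (hin : i + 1 ≤ n - 1) (hn : 3 ≤ n)
    (a c : ℂ) (hc : c ≠ 0) :
    loc2 n i !![a, (1 - a) / c; c, 0] * loc2 n (i + 1) !![a, (1 - a) / c; c, 0]
        * loc2 n i !![a, (1 - a) / c; c, 0]
      = loc2 n (i + 1) !![a, (1 - a) / c; c, 0] * loc2 n i !![a, (1 - a) / c; c, 0]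
        * loc2 n (i + 1) !![a, (1 - a) / c; c, 0] := by
  have hi' : i < n := by omega
  have hi1 : 1 ≤ i + 1 := by omega
  have hi1' : i + 1 < n := by omega
  ext r s
  simp only [mulR hi hi', mulR hi1 hi1', mulL hi hi', mulL hi1 hi1', Nat.add_sub_cancel]
  by_cases hr1 : (r:ℕ) = i - 1 <;> by_cases hr2 : (r:ℕ) = i <;> by_cases hr3 : (r:ℕ) = i + 1 <;>
    by_cases hs1 : (s:ℕ) = i - 1 <;> by_cases hs2 : (s:ℕ) = i <;> by_cases hs3 : (s:ℕ) = i + 1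
  all_goals try (exfalso; omega)
  all_goals simp [loc2, Fin.ext_iff, hr1, hr2, hr3, hs1, hs2, hs3, Nat.add_sub_cancel,
        (show i - 1 ≠ i by omega), (show i ≠ i - 1 by omega),
        (show i - 1 ≠ i + 1 by omega), (show i + 1 ≠ i - 1 by omega),
        (show i ≠ i + 1 by omega), (show i + 1 ≠ i by omega)]
  all_goals try field_simp
  all_goals ring1

theorem stmt19 (n : ℕ) (hn : 3 ≤ n) (a c : ℂ) (hc : c ≠ 0) (ha : a ≠ 1) :
    IsUnit !![a, (1 - a) / c; c, 0] ∧
    (∀ i j : ℕ, 1 ≤ i → i ≤ n - 1 → 1 ≤ j → j ≤ n - 1 → (i + 2 ≤ j ∨ j + 2 ≤ i) →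
        loc2 n i !![a, (1 - a) / c; c, 0] * loc2 n j !![a, (1 - a) / c; c, 0]
          = loc2 n j !![a, (1 - a) / c; c, 0] * loc2 n i !![a, (1 - a) / c; c, 0]) ∧
    (∀ i : ℕ, 1 ≤ i → i ≤ n - 2 →
        loc2 n i !![a, (1 - a) / c; c, 0] * loc2 n (i + 1) !![a, (1 - a) / c; c, 0]
            * loc2 n i !![a, (1 - a) / c; c, 0]
          = loc2 n (i + 1) !![a, (1 - a) / c; c, 0] * loc2 n i !![a, (1 - a) / c; c, 0]
            * loc2 n (i + 1) !![a, (1 - a) / c; c, 0]) := by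
  refine ⟨?_, ?_, ?_⟩
  · rw [Matrix.isUnit_iff_isUnit_det, Matrix.det_fin_two_of, isUnit_iff_ne_zero]
    rw [div_mul_eq_mul_div, mul_comm, mul_div_assoc, div_self hc]
    intro h
    apply ha
    have : (1 : ℂ) - a = 0 := by linear_combination -h
    linear_combination -this
  · intro i j hi hin hj hjn hd
    rcases hd with h | h
    · exact loc2_comm hi hjn h hn _ _
    · exact (loc2_comm hj hin h hn _ _).symm
  · intro i hi hin
    exact loc2_braid hi (by omega) hn a c hc
end
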